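/- arXiv:quant-ph/0003048 — 6 statements merged into one kernel-verified Lean document; each statement's English description precedes it below -/
import Mathlib

section
/- Let ρ and σ be density matrices on the same n-dimensional complex Hilbert space. Then the conditional entropy satisfies 0 ≤ S(ρ|σ) ≤ S(ρ). -/
open Matrix
open scoped ComplexOrder InnerProductSpace

/-- `η(A) = −∑ᵢ λᵢ ln λᵢ` where the `λᵢ` are the eigenvalues of the Hermitian matrix `A`
listed with multiplicity (with the convention `0 · ln 0 = 0`, which holds automatically
since `Real.log 0 = 0`). -/
noncomputable def eta {n : ℕ} (A : Matrix (Fin n) (Fin n) ℂ) : ℝ :=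
  if h : A.IsHermitian then -∑ i, h.eigenvalues i * Real.log (h.eigenvalues i) else 0

/-- `F(ρ, Q) = η(QρQ) + tr(QρQ)·ln tr(QρQ)`. -/
noncomputable def condF {n : ℕ} (ρ Q : Matrix (Fin n) (Fin n) ℂ) : ℝ :=
  eta (Q * ρ * Q) + (Q * ρ * Q).trace.re * Real.log (Q * ρ * Q).trace.re

/-- The orthogonal projection onto the eigenspace of a Hermitian matrix for the value `c`. -/
noncomputable def eigProj {n : ℕ} {σ : Matrix (Fin n) (Fin n) ℂ} (h : σ.IsHermitian) (c : ℝ) :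
    Matrix (Fin n) (Fin n) ℂ :=
  (h.eigenvectorUnitary : Matrix (Fin n) (Fin n) ℂ) *
    Matrix.diagonal (fun i => if h.eigenvalues i = c then (1 : ℂ) else 0) *
    star (h.eigenvectorUnitary : Matrix (Fin n) (Fin n) ℂ)

/-- The conditional entropy `S(ρ|σ) = ∑ⱼ tr(Qⱼ σ) · F(ρ, Qⱼ)`, the sum running over the
distinct eigenvalues `σⱼ` of `σ`, with `Qⱼ` the corresponding eigenprojections. -/
noncomputable def condS {n : ℕ} (ρ σ : Matrix (Fin n) (Fin n) ℂ) : ℝ :=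
  if h : σ.IsHermitian then
    ∑ c ∈ Finset.image h.eigenvalues Finset.univ,
      (eigProj h c * σ).trace.re * condF ρ (eigProj h c)
  else 0


namespace CondSAux

/-! ### Scalar lemmas -/

/-- Helper: `G v = (∑ v) ln (∑ v) - ∑ vᵢ ln vᵢ`. -/
noncomputable def G {m : ℕ} (v : Fin m → ℝ) : ℝ :=
  (∑ i, v i) * Real.log (∑ i, v i) - ∑ i, v i * Real.log (v i)

lemma phi_mono (S : ℝ) (hS : 0 ≤ S) :
    MonotoneOn (fun x : ℝ => (S + x) * Real.log (S + x) - x * Real.log x) (Set.Ici 0) := by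
  have hd : ∀ x ∈ Set.Ioi (0:ℝ),
      HasDerivAt (fun x : ℝ => (S + x) * Real.log (S + x) - x * Real.log x)
        ((Real.log (S + x) + 1) * 1 - (Real.log x + 1)) x := by
    intro x hx
    have hx0 : (0:ℝ) < x := hx
    have h1 : HasDerivAt (fun y : ℝ => S + y) 1 x := (hasDerivAt_id x).const_add S
    have h2 : HasDerivAt (fun y : ℝ => y * Real.log y) (Real.log (S + x) + 1) (S + x) :=
      Real.hasDerivAt_mul_log (by positivity)
    exact (h2.comp x h1).sub (Real.hasDerivAt_mul_log hx0.ne')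
  refine monotoneOn_of_deriv_nonneg (convex_Ici 0) ?_ ?_ ?_
  · exact ((Real.continuous_mul_log.comp (continuous_const.add continuous_id)).sub
      Real.continuous_mul_log).continuousOn
  · intro x hx
    rw [interior_Ici] at hx
    exact (hd x hx).differentiableAt.differentiableWithinAt
  · intro x hx
    rw [interior_Ici] at hx
    rw [(hd x hx).deriv]
    have : Real.log x ≤ Real.log (S + x) := Real.log_le_log hx (by linarith)
    nlinarith

lemma G_update {m : ℕ} (u : Fin m → ℝ) (hu : ∀ i, 0 ≤ u i) (k : Fin m) (y : ℝ)
    (hy : u k ≤ y) : G u ≤ G (Function.update u k y) := by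
  classical
  set S : ℝ := ∑ i ∈ Finset.univ.erase k, u i with hS
  have hS0 : 0 ≤ S := Finset.sum_nonneg fun i _ => hu i
  set C : ℝ := ∑ i ∈ Finset.univ.erase k, u i * Real.log (u i) with hC
  have hsum : ∀ z : ℝ, (∑ i, Function.update u k z i) = S + z := by
    intro z
    rw [Finset.sum_update_of_mem (Finset.mem_univ k), ← Finset.erase_eq]
    ring
  have hsum2 : ∀ z : ℝ,
      (∑ i, Function.update u k z i * Real.log (Function.update u k z i))
        = z * Real.log z + C := by
    intro z
    have : (fun i => Function.update u k z i * Real.log (Function.update u k z i))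
        = Function.update (fun i => u i * Real.log (u i)) k (z * Real.log z) := by
      funext i
      by_cases h : i = k
      · subst h; simp
      · simp [Function.update_of_ne h]
    rw [this, Finset.sum_update_of_mem (Finset.mem_univ k), ← Finset.erase_eq]
  have hGz : ∀ z : ℝ, G (Function.update u k z)
      = (S + z) * Real.log (S + z) - z * Real.log z - C := by
    intro z; rw [G, hsum, hsum2]; ring
  have hGu : G u = (S + u k) * Real.log (S + u k) - u k * Real.log (u k) - C := by
    have := hGz (u k)
    rwa [Function.update_eq_self] at this
  rw [hGu, hGz]
  have := phi_mono S hS0 (Set.mem_Ici.mpr (hu k)) (Set.mem_Ici.mpr ((hu k).trans hy)) hy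
  simpa using sub_le_sub_right this C

lemma G_mono {m : ℕ} (v w : Fin m → ℝ) (hv : ∀ i, 0 ≤ v i) (hvw : ∀ i, v i ≤ w i) :
    G v ≤ G w := by
  classical
  have key : ∀ s : Finset (Fin m), G v ≤ G (fun i => if i ∈ s then w i else v i) := by
    intro s
    induction s using Finset.induction with
    | empty => simp
    | @insert k s hk ih =>
      refine le_trans ih ?_
      have heq : (fun i => if i ∈ insert k s then w i else v i)
          = Function.update (fun i => if i ∈ s then w i else v i) k (w k) := by
        funext i
        by_cases h : i = k
        · subst h; simp [hk]
        · simp [Function.update_of_ne h, Finset.mem_insert, h]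
      rw [heq]
      refine G_update _ (fun i => ?_) k (w k) ?_
      · by_cases h : i ∈ s
        · simpa [h] using (hv i).trans (hvw i)
        · simpa [h] using hv i
      · simp [hk]; exact hvw k
  simpa using key Finset.univ

lemma G_comp_perm {m : ℕ} (v : Fin m → ℝ) (e : Equiv.Perm (Fin m)) : G (v ∘ e) = G v := by
  unfold G
  simp only [Function.comp_apply]
  rw [Equiv.sum_comp e v, Equiv.sum_comp e (fun j => v j * Real.log (v j))]




lemma sorted_le {m : ℕ} (μ r : Fin m → ℝ) (hr : ∀ i, 0 ≤ r i)
    (hcount : ∀ c : ℝ, 0 < c →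
      (Finset.univ.filter fun i => c ≤ μ i).card ≤
        (Finset.univ.filter fun i => c ≤ r i).card) (k : Fin m) :
    (μ ∘ Tuple.sort μ) k ≤ (r ∘ Tuple.sort r) k := by
  classical
  set a := (μ ∘ Tuple.sort μ) k with ha
  rcases le_or_gt a 0 with h0 | h0
  · exact h0.trans (hr _)
  by_contra hlt
  push_neg at hlt
  have h1 : Finset.image (⇑(Tuple.sort μ)) (Finset.Ici k)
      ⊆ Finset.univ.filter fun i => a ≤ μ i := by
    intro i hi
    simp only [Finset.mem_image, Finset.mem_Ici] at hi
    obtain ⟨j, hj, rfl⟩ := hi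
    simp only [Finset.mem_filter, Finset.mem_univ, true_and]
    exact Tuple.monotone_sort μ hj
  have c1 : m - (k : ℕ) ≤ (Finset.univ.filter fun i => a ≤ μ i).card := by
    calc m - (k : ℕ) = (Finset.Ici k).card := (Fin.card_Ici k).symm
    _ = (Finset.image (⇑(Tuple.sort μ)) (Finset.Ici k)).card :=
        (Finset.card_image_of_injective _ (Equiv.injective _)).symm
    _ ≤ _ := Finset.card_le_card h1
  have h2 : (Finset.univ.filter fun i => a ≤ r i)
      ⊆ Finset.image (⇑(Tuple.sort r)) (Finset.Ioi k) := by
    intro i hi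
    simp only [Finset.mem_filter, Finset.mem_univ, true_and] at hi
    simp only [Finset.mem_image, Finset.mem_Ioi]
    refine ⟨(Tuple.sort r).symm i, ?_, by simp⟩
    by_contra hle
    push_neg at hle
    have h3 : r ((Tuple.sort r) ((Tuple.sort r).symm i)) ≤ (r ∘ Tuple.sort r) k :=
      Tuple.monotone_sort r hle
    rw [Equiv.apply_symm_apply] at h3
    linarith
  have c2 : (Finset.univ.filter fun i => a ≤ r i).card ≤ m - 1 - (k : ℕ) := by
    calc (Finset.univ.filter fun i => a ≤ r i).card
        ≤ (Finset.image (⇑(Tuple.sort r)) (Finset.Ioi k)).card := Finset.card_le_card h2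
    _ = (Finset.Ioi k).card := Finset.card_image_of_injective _ (Equiv.injective _)
    _ = m - 1 - (k : ℕ) := Fin.card_Ioi k
  have := hcount a h0
  have hk : (k : ℕ) < m := k.isLt
  omega


/-! ### Matrix basics -/

variable {n : ℕ}


lemma eta_of {A : Matrix (Fin n) (Fin n) ℂ} (hA : A.IsHermitian) :
    eta A = -∑ i, hA.eigenvalues i * Real.log (hA.eigenvalues i) := by
  simp [eta, hA]

lemma trace_conj' (U M : Matrix (Fin n) (Fin n) ℂ) (hU : star U * U = 1) :
    (U * M * star U).trace = M.trace := by
  rw [trace_mul_cycle, hU, Matrix.one_mul]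

lemma trace_eq_sum_eigenvalues {A : Matrix (Fin n) (Fin n) ℂ} (hA : A.IsHermitian) :
    A.trace = ∑ i, (hA.eigenvalues i : ℂ) := by
  conv_lhs => rw [hA.spectral_theorem, Unitary.conjStarAlgAut_apply]
  rw [trace_conj' _ _ (mem_unitaryGroup_iff'.mp hA.eigenvectorUnitary.2), trace_diagonal]
  rfl

lemma trace_re_eq {A : Matrix (Fin n) (Fin n) ℂ} (hA : A.IsHermitian) :
    A.trace.re = ∑ i, hA.eigenvalues i := by
  rw [trace_eq_sum_eigenvalues hA, Complex.re_sum]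
  simp

lemma F_nonneg {M : Matrix (Fin n) (Fin n) ℂ} (hM : M.PosSemidef) :
    0 ≤ eta M + M.trace.re * Real.log M.trace.re := by
  rw [eta_of hM.1, trace_re_eq hM.1]
  set e := hM.1.eigenvalues with he
  have hnn : ∀ i, 0 ≤ e i := hM.eigenvalues_nonneg
  set t : ℝ := ∑ i, e i with ht
  have key : ∀ i : Fin n, e i * Real.log (e i) ≤ e i * Real.log t := by
    intro i
    rcases eq_or_lt_of_le (hnn i) with h | h
    · simp [← h]
    · refine mul_le_mul_of_nonneg_left ?_ (hnn i)
      refine Real.log_le_log h (Finset.single_le_sum (fun j _ => hnn j) (Finset.mem_univ i))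
  have : ∑ i, e i * Real.log (e i) ≤ ∑ i, e i * Real.log t := Finset.sum_le_sum fun i _ => key i
  rw [← Finset.sum_mul] at this
  linarith


/-! ### Spectral part -/


lemma toEuclideanLin_eigen {A : Matrix (Fin n) (Fin n) ℂ} (hA : A.IsHermitian) (i : Fin n) :
    Matrix.toEuclideanLin A (hA.eigenvectorBasis i)
      = (hA.eigenvalues i : ℂ) • hA.eigenvectorBasis i := by
  have h1 := hA.mulVec_eigenvectorBasis i
  apply (WithLp.equiv 2 (Fin n → ℂ)).injective
  change A *ᵥ (hA.eigenvectorBasis i).ofLp = ((hA.eigenvalues i : ℂ) • hA.eigenvectorBasis i).ofLp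
  rw [h1]
  exact RCLike.real_smul_eq_coe_smul (K := ℂ) _ _

lemma inner_map_eq {m : ℕ} (b : OrthonormalBasis (Fin m) ℂ (EuclideanSpace ℂ (Fin m)))
    (T : EuclideanSpace ℂ (Fin m) →ₗ[ℂ] EuclideanSpace ℂ (Fin m)) (μ : Fin m → ℝ)
    (hT : ∀ i, T (b i) = (μ i : ℂ) • b i) (x : EuclideanSpace ℂ (Fin m)) :
    ⟪x, T x⟫_ℂ = ((∑ i, μ i * ‖b.repr x i‖ ^ 2 : ℝ) : ℂ) := by
  have hTx : T x = ∑ i, (b.repr x i * (μ i : ℂ)) • b i := by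
    conv_lhs => rw [← b.sum_repr x, map_sum]
    congr 1
    funext i
    rw [LinearMap.map_smul, hT, smul_smul]
  rw [hTx, inner_sum]
  push_cast
  congr 1
  funext i
  rw [inner_smul_right, ← inner_conj_symm, b.repr_apply_apply,
    mul_comm ⟪b i, x⟫_ℂ ((μ i : ℝ) : ℂ), mul_assoc, RCLike.mul_conj]
  rfl

lemma toEuclideanLin_mul (M N : Matrix (Fin n) (Fin n) ℂ) (x : EuclideanSpace ℂ (Fin n)) :
    Matrix.toEuclideanLin (M * N) x = Matrix.toEuclideanLin M (Matrix.toEuclideanLin N x) := by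
  apply (WithLp.equiv 2 (Fin n → ℂ)).injective
  change (M * N) *ᵥ x.ofLp = M *ᵥ (N *ᵥ x.ofLp)
  rw [← Matrix.mulVec_mulVec]

set_option maxHeartbeats 1000000 in
lemma count_le {Q ρ : Matrix (Fin n) (Fin n) ℂ} (hρ : ρ.PosSemidef)
    (hQ : Q.IsHermitian) (hQ2 : Q * Q = Q) (hA : (Q * ρ * Q).PosSemidef)
    (c : ℝ) (hc : 0 < c) :
    (Finset.univ.filter fun i => c ≤ hA.1.eigenvalues i).card ≤
      (Finset.univ.filter fun i => c ≤ hρ.1.eigenvalues i).card := by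
  classical
  by_contra hcard
  push_neg at hcard
  set μ := hA.1.eigenvalues with hμ
  set r := hρ.1.eigenvalues with hr
  set s : Finset (Fin n) := Finset.univ.filter (fun i => c ≤ μ i) with hs
  set t : Finset (Fin n) := Finset.univ.filter (fun i => c ≤ r i) with ht
  set bA := hA.1.eigenvectorBasis with hbA
  set bR := hρ.1.eigenvectorBasis with hbR
  let Φ : (↥s → ℂ) →ₗ[ℂ] EuclideanSpace ℂ (Fin n) :=
    { toFun := fun a => ∑ i : ↥s, a i • bA (i : Fin n)
      map_add' := fun a b => by simp [add_smul, Finset.sum_add_distrib]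
      map_smul' := fun cc a => by simp [smul_smul, Finset.smul_sum] }
  let Ψ : EuclideanSpace ℂ (Fin n) →ₗ[ℂ] (↥t → ℂ) :=
    { toFun := fun x j => bR.repr x (j : Fin n)
      map_add' := fun x y => by funext j; simp
      map_smul' := fun cc x => by funext j; simp }
  obtain ⟨a, haK, ha0⟩ : ∃ a : ↥s → ℂ, (Ψ ∘ₗ Φ) a = 0 ∧ a ≠ 0 := by
    have h1 : Module.finrank ℂ (↥s → ℂ) = s.card := by
      simp [Module.finrank_pi]
    have h2 : Module.finrank ℂ (↥t → ℂ) = t.card := by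
      simp [Module.finrank_pi]
    have h3 := LinearMap.finrank_range_add_finrank_ker (Ψ ∘ₗ Φ)
    have h4 : Module.finrank ℂ ↥(LinearMap.range (Ψ ∘ₗ Φ)) ≤ t.card := by
      rw [← h2]; exact Submodule.finrank_le _
    have h5 : 0 < Module.finrank ℂ ↥(LinearMap.ker (Ψ ∘ₗ Φ)) := by omega
    obtain ⟨y, hy0⟩ := Module.finrank_pos_iff_exists_ne_zero.mp h5
    exact ⟨(y : ↥s → ℂ), y.2, fun h => hy0 (Subtype.ext h)⟩
  set x : EuclideanSpace ℂ (Fin n) := Φ a with hx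
  have horthA := orthonormal_iff_ite.mp bA.orthonormal
  have hreprA : ∀ i : Fin n, bA.repr x i = if h : i ∈ s then a ⟨i, h⟩ else 0 := by
    intro i
    rw [bA.repr_apply_apply]
    have hxe : x = ∑ j : ↥s, a j • bA (j : Fin n) := rfl
    rw [hxe, inner_sum]
    simp only [inner_smul_right, horthA]
    by_cases h : i ∈ s
    · rw [dif_pos h, Finset.sum_eq_single (⟨i, h⟩ : ↥s)]
      · simp
      · intro j _ hj
        have : i ≠ (j : Fin n) := by
          intro he; exact hj (Subtype.ext he.symm)
        simp [this]
      · simp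
    · rw [dif_neg h]
      refine Finset.sum_eq_zero fun j _ => ?_
      have : i ≠ (j : Fin n) := by
        intro he; rw [he] at h; exact h j.2
      simp [this]
  have hreprR0 : ∀ j : Fin n, j ∈ t → bR.repr x j = 0 := by
    intro j hj
    have := congrFun haK ⟨j, hj⟩
    exact this
  -- norm identities
  have hid : ∀ (b : OrthonormalBasis (Fin n) ℂ (EuclideanSpace ℂ (Fin n))),
      ⟪x, x⟫_ℂ = ((∑ i, ‖b.repr x i‖ ^ 2 : ℝ) : ℂ) := by
    intro b
    have := inner_map_eq b LinearMap.id (fun _ => 1) (fun i => by simp) x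
    simpa using this
  have hnorm : (∑ i, ‖bA.repr x i‖ ^ 2) = ∑ i, ‖bR.repr x i‖ ^ 2 := by
    have h1 := hid bA
    have h2 := hid bR
    exact_mod_cast h1.symm.trans h2
  -- positivity of the norm
  obtain ⟨j0, hj0⟩ : ∃ j0 : ↥s, a j0 ≠ 0 := by
    by_contra hall
    push_neg at hall
    exact ha0 (funext fun j => hall j)
  have hSA : 0 < ∑ i, ‖bA.repr x i‖ ^ 2 := by
    have hterm : 0 < ‖bA.repr x (j0 : Fin n)‖ ^ 2 := by
      rw [hreprA, dif_pos j0.2]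
      have he : (⟨(j0 : Fin n), j0.2⟩ : ↥s) = j0 := rfl
      rw [he]
      exact pow_pos (norm_pos_iff.mpr hj0) 2
    refine lt_of_lt_of_le hterm ?_
    exact Finset.single_le_sum (f := fun i => ‖bA.repr x i‖ ^ 2)
      (fun i _ => by positivity) (Finset.mem_univ _)
  -- Rayleigh quotients
  have hRA : ⟪x, Matrix.toEuclideanLin (Q * ρ * Q) x⟫_ℂ
      = ((∑ i, μ i * ‖bA.repr x i‖ ^ 2 : ℝ) : ℂ) :=
    inner_map_eq bA _ μ (fun i => toEuclideanLin_eigen hA.1 i) x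
  have hRR : ⟪x, Matrix.toEuclideanLin ρ x⟫_ℂ
      = ((∑ i, r i * ‖bR.repr x i‖ ^ 2 : ℝ) : ℂ) :=
    inner_map_eq bR _ r (fun i => toEuclideanLin_eigen hρ.1 i) x
  -- Q fixes x
  have hQx : Matrix.toEuclideanLin Q x = x := by
    have hfix : ∀ i : ↥s, Matrix.toEuclideanLin Q (bA (i : Fin n)) = bA (i : Fin n) := by
      intro i
      have hμi : c ≤ μ (i : Fin n) := (Finset.mem_filter.mp i.2).2
      have hμ0 : (μ (i : Fin n) : ℂ) ≠ 0 := by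
        exact_mod_cast (ne_of_gt (lt_of_lt_of_le hc hμi))
      have e1 : Matrix.toEuclideanLin Q (Matrix.toEuclideanLin (Q * ρ * Q) (bA (i : Fin n)))
          = Matrix.toEuclideanLin (Q * ρ * Q) (bA (i : Fin n)) := by
        rw [← toEuclideanLin_mul]
        have : Q * (Q * ρ * Q) = Q * ρ * Q := by
          rw [← Matrix.mul_assoc, ← Matrix.mul_assoc, hQ2]
        rw [this]
      rw [toEuclideanLin_eigen hA.1 i, _root_.map_smul] at e1
      exact smul_right_injective _ hμ0 e1
    have : Matrix.toEuclideanLin Q x = ∑ i : ↥s, a i • bA (i : Fin n) := by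
      rw [hx]
      show Matrix.toEuclideanLin Q (∑ i : ↥s, a i • bA (i : Fin n)) = _
      rw [map_sum]
      congr 1
      funext i
      rw [_root_.map_smul, hfix]
    rw [this]
    rfl
  -- symmetric operator equality
  have hEq : ⟪x, Matrix.toEuclideanLin (Q * ρ * Q) x⟫_ℂ = ⟪x, Matrix.toEuclideanLin ρ x⟫_ℂ := by
    have hsym : (Matrix.toEuclideanLin Q).IsSymmetric := isHermitian_iff_isSymmetric.mp hQ
    calc ⟪x, Matrix.toEuclideanLin (Q * ρ * Q) x⟫_ℂ
        = ⟪x, Matrix.toEuclideanLin Q (Matrix.toEuclideanLin (ρ * Q) x)⟫_ℂ := by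
          rw [← toEuclideanLin_mul]; rw [Matrix.mul_assoc]
      _ = ⟪Matrix.toEuclideanLin Q x, Matrix.toEuclideanLin (ρ * Q) x⟫_ℂ := (hsym _ _).symm
      _ = ⟪x, Matrix.toEuclideanLin ρ (Matrix.toEuclideanLin Q x)⟫_ℂ := by
          rw [hQx, toEuclideanLin_mul, hQx]
      _ = ⟪x, Matrix.toEuclideanLin ρ x⟫_ℂ := by rw [hQx]
  -- lower bound
  have hlow : c * (∑ i, ‖bA.repr x i‖ ^ 2) ≤ ∑ i, μ i * ‖bA.repr x i‖ ^ 2 := by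
    rw [Finset.mul_sum]
    refine Finset.sum_le_sum fun i _ => ?_
    by_cases h : i ∈ s
    · have hci : c ≤ μ i := (Finset.mem_filter.mp h).2
      have : (0:ℝ) ≤ ‖bA.repr x i‖ ^ 2 := by positivity
      nlinarith
    · rw [hreprA i, dif_neg h]
      simp
  -- upper bound (strict)
  have hup : (∑ i, r i * ‖bR.repr x i‖ ^ 2) < c * (∑ i, ‖bR.repr x i‖ ^ 2) := by
    rw [Finset.mul_sum]
    obtain ⟨k0, hk0⟩ : ∃ k0 : Fin n, bR.repr x k0 ≠ 0 := by
      by_contra hall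
      push_neg at hall
      have : (∑ i, ‖bR.repr x i‖ ^ 2) = 0 := by
        refine Finset.sum_eq_zero fun i _ => by rw [hall i]; simp
      rw [← hnorm] at this
      linarith
    have hk0t : k0 ∉ t := fun h => hk0 (hreprR0 k0 h)
    have hk0r : r k0 < c := by
      by_contra hge
      push_neg at hge
      exact hk0t (Finset.mem_filter.mpr ⟨Finset.mem_univ _, hge⟩)
    refine Finset.sum_lt_sum (fun i _ => ?_) ⟨k0, Finset.mem_univ k0, ?_⟩
    · by_cases h : i ∈ t
      · rw [hreprR0 i h]; simp
      · have : r i < c := by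
          by_contra hge
          push_neg at hge
          exact h (Finset.mem_filter.mpr ⟨Finset.mem_univ _, hge⟩)
        have h2 : (0:ℝ) ≤ ‖bR.repr x i‖ ^ 2 := by positivity
        nlinarith
    · have : 0 < ‖bR.repr x k0‖ ^ 2 := pow_pos (norm_pos_iff.mpr hk0) 2
      nlinarith
  -- contradiction
  have e1 : (∑ i, μ i * ‖bA.repr x i‖ ^ 2) = ∑ i, r i * ‖bR.repr x i‖ ^ 2 := by
    have := hRA.symm.trans (hEq.trans hRR)
    exact_mod_cast this
  rw [hnorm] at hlow
  linarith



/-! ### Eigenprojections -/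

variable {σ : Matrix (Fin n) (Fin n) ℂ} (h : σ.IsHermitian)
lemma eigProj_posSemidef (c : ℝ) : (eigProj h c).PosSemidef := by
  have hd : (Matrix.diagonal (fun i => if h.eigenvalues i = c then (1 : ℂ) else 0)).PosSemidef := by
    refine Matrix.posSemidef_diagonal_iff.mpr fun i => ?_
    split_ifs
    · exact zero_le_one
    · exact le_refl 0
  have h2 := hd.mul_mul_conjTranspose_same (h.eigenvectorUnitary : Matrix (Fin n) (Fin n) ℂ)
  rw [eigProj, Matrix.star_eq_conjTranspose]
  exact h2

lemma eigProj_isHermitian (c : ℝ) : (eigProj h c).IsHermitian := (eigProj_posSemidef h c).1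

lemma eigProj_idem (c : ℝ) : eigProj h c * eigProj h c = eigProj h c := by
  have hU : star (h.eigenvectorUnitary : Matrix (Fin n) (Fin n) ℂ) *
      (h.eigenvectorUnitary : Matrix (Fin n) (Fin n) ℂ) = 1 :=
    mem_unitaryGroup_iff'.mp h.eigenvectorUnitary.2
  rw [eigProj]
  simp only [Matrix.mul_assoc]
  rw [← Matrix.mul_assoc (star _) _ _, hU, Matrix.one_mul,
    ← Matrix.mul_assoc (Matrix.diagonal _) (Matrix.diagonal _) _, Matrix.diagonal_mul_diagonal]
  have harg : (fun i => (if h.eigenvalues i = c then (1:ℂ) else 0) *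
      if h.eigenvalues i = c then 1 else 0)
      = (fun i => if h.eigenvalues i = c then (1:ℂ) else 0) := by
    funext i; by_cases hh : h.eigenvalues i = c <;> simp [hh]
  rw [harg]

lemma sum_eigProj : ∑ c ∈ Finset.image h.eigenvalues Finset.univ, eigProj h c = 1 := by
  classical
  have hU : (h.eigenvectorUnitary : Matrix (Fin n) (Fin n) ℂ) *
      star (h.eigenvectorUnitary : Matrix (Fin n) (Fin n) ℂ) = 1 :=
    mem_unitaryGroup_iff.mp h.eigenvectorUnitary.2
  simp only [eigProj]
  rw [← Finset.sum_mul, ← Finset.mul_sum]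
  have hone : (∑ c ∈ Finset.image h.eigenvalues Finset.univ,
      Matrix.diagonal (fun i => if h.eigenvalues i = c then (1:ℂ) else 0))
      = (1 : Matrix (Fin n) (Fin n) ℂ) := by
    ext i j
    rw [Matrix.sum_apply]
    by_cases hij : i = j
    · subst hij
      simp only [Matrix.diagonal_apply_eq, Matrix.one_apply_eq]
      rw [Finset.sum_ite_eq (Finset.image h.eigenvalues Finset.univ) (h.eigenvalues i)
        (fun _ => (1:ℂ))]
      simp
    · simp [Matrix.diagonal_apply_ne _ hij, Matrix.one_apply_ne hij]
  rw [hone, Matrix.mul_one, hU]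

lemma eigProj_mul_trace (c : ℝ) :
    (eigProj h c * σ).trace
      = ((∑ i, if h.eigenvalues i = c then h.eigenvalues i else 0 : ℝ) : ℂ) := by
  have hU : star (h.eigenvectorUnitary : Matrix (Fin n) (Fin n) ℂ) *
      (h.eigenvectorUnitary : Matrix (Fin n) (Fin n) ℂ) = 1 :=
    mem_unitaryGroup_iff'.mp h.eigenvectorUnitary.2
  have hcancel : ∀ X : Matrix (Fin n) (Fin n) ℂ,
      star (h.eigenvectorUnitary : Matrix (Fin n) (Fin n) ℂ) *
        ((h.eigenvectorUnitary : Matrix (Fin n) (Fin n) ℂ) * X) = X := fun X => by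
    rw [← Matrix.mul_assoc, hU, Matrix.one_mul]
  have key : eigProj h c * σ
      = (h.eigenvectorUnitary : Matrix (Fin n) (Fin n) ℂ) *
        (Matrix.diagonal (fun i => if h.eigenvalues i = c then (1:ℂ) else 0) *
          Matrix.diagonal (RCLike.ofReal ∘ h.eigenvalues)) *
        star (h.eigenvectorUnitary : Matrix (Fin n) (Fin n) ℂ) := by
    conv_lhs => enter [2]; rw [h.spectral_theorem, Unitary.conjStarAlgAut_apply]
    unfold eigProj
    simp only [Matrix.mul_assoc]
    rw [hcancel]
  rw [key]
  have htr := trace_conj' (h.eigenvectorUnitary : Matrix (Fin n) (Fin n) ℂ)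
    (Matrix.diagonal (fun i => if h.eigenvalues i = c then (1:ℂ) else 0) *
      Matrix.diagonal (RCLike.ofReal ∘ h.eigenvalues)) hU
  rw [htr, Matrix.diagonal_mul_diagonal, Matrix.trace_diagonal, Complex.ofReal_sum]
  congr 1
  funext i
  by_cases hh : h.eigenvalues i = c <;> simp [hh]

lemma eigProj_trace_re_nonneg (hσ : σ.PosSemidef) (c : ℝ) :
    0 ≤ (eigProj hσ.1 c * σ).trace.re := by
  rw [eigProj_mul_trace, Complex.ofReal_re]
  refine Finset.sum_nonneg fun i _ => ?_
  by_cases hh : hσ.1.eigenvalues i = c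
  · simpa [hh] using hσ.eigenvalues_nonneg i
  · simp [hh]

lemma sum_trace_eigProj (hσ1 : σ.trace = 1) :
    ∑ c ∈ Finset.image h.eigenvalues Finset.univ, (eigProj h c * σ).trace.re = 1 := by
  have hs : ∑ c ∈ Finset.image h.eigenvalues Finset.univ, (eigProj h c * σ).trace
      = σ.trace := by
    rw [← Matrix.trace_sum, ← Finset.sum_mul, sum_eigProj h, Matrix.one_mul]
  rw [← Complex.re_sum, hs, hσ1, Complex.one_re]



/-! ### condF lemmas -/

lemma condF_nonneg {Q ρ : Matrix (Fin n) (Fin n) ℂ} (hρ : ρ.PosSemidef)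
    (hQ : Q.IsHermitian) : 0 ≤ condF ρ Q := by
  have hA : (Q * ρ * Q).PosSemidef := by
    have h2 := hρ.mul_mul_conjTranspose_same Q
    rwa [hQ.eq] at h2
  simpa [condF] using F_nonneg hA

lemma condF_le_eta {Q ρ : Matrix (Fin n) (Fin n) ℂ} (hρ : ρ.PosSemidef) (hρ1 : ρ.trace = 1)
    (hQ : Q.IsHermitian) (hQ2 : Q * Q = Q) : condF ρ Q ≤ eta ρ := by
  have hA : (Q * ρ * Q).PosSemidef := by
    have h2 := hρ.mul_mul_conjTranspose_same Q
    rwa [hQ.eq] at h2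
  set μ := hA.1.eigenvalues with hμ
  set r := hρ.1.eigenvalues with hr
  have hcond : condF ρ Q = G μ := by
    rw [condF, eta_of hA.1, trace_re_eq hA.1, G]
    ring
  have hetaρ : eta ρ = G r := by
    rw [eta_of hρ.1, G]
    have h1 : ∑ i, r i = 1 := by
      rw [← trace_re_eq hρ.1, hρ1, Complex.one_re]
    rw [h1]
    simp [Real.log_one]
    rfl
  rw [hcond, hetaρ]
  calc G μ = G (μ ∘ Tuple.sort μ) := (G_comp_perm μ _).symm
    _ ≤ G (r ∘ Tuple.sort r) := by
        refine G_mono _ _ (fun k => hA.eigenvalues_nonneg _) (fun k => ?_)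
        exact sorted_le μ r (fun i => hρ.eigenvalues_nonneg i)
          (fun c hc => count_le hρ hQ hQ2 hA c hc) k
    _ = G r := G_comp_perm r _

end CondSAux

open CondSAux in
/-- For density matrices `ρ` and `σ` on the same `n`-dimensional complex
Hilbert space, `0 ≤ S(ρ|σ) ≤ S(ρ)`. -/
theorem condS_nonneg_le_entropy {n : ℕ} (hn : 1 ≤ n)
    (ρ σ : Matrix (Fin n) (Fin n) ℂ)
    (hρ : ρ.PosSemidef) (hρ1 : ρ.trace = 1)
    (hσ : σ.PosSemidef) (hσ1 : σ.trace = 1) :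
    0 ≤ condS ρ σ ∧ condS ρ σ ≤ eta ρ := by
  have hσh : σ.IsHermitian := hσ.1
  have hcondS : condS ρ σ = ∑ c ∈ Finset.image hσh.eigenvalues Finset.univ,
      (eigProj hσh c * σ).trace.re * condF ρ (eigProj hσh c) := by
    unfold condS
    rw [dif_pos hσh]
  constructor
  · rw [hcondS]
    refine Finset.sum_nonneg fun c _ => ?_
    exact mul_nonneg (eigProj_trace_re_nonneg hσ c)
      (condF_nonneg hρ (eigProj_isHermitian hσh c))
  · rw [hcondS]
    calc ∑ c ∈ Finset.image hσh.eigenvalues Finset.univ,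
        (eigProj hσh c * σ).trace.re * condF ρ (eigProj hσh c)
        ≤ ∑ c ∈ Finset.image hσh.eigenvalues Finset.univ,
          (eigProj hσh c * σ).trace.re * eta ρ := by
          refine Finset.sum_le_sum fun c _ => ?_
          exact mul_le_mul_of_nonneg_left
            (condF_le_eta hρ hρ1 (eigProj_isHermitian hσh c) (eigProj_idem hσh c))
            (eigProj_trace_re_nonneg hσ c)
      _ = eta ρ := by rw [← Finset.sum_mul, sum_trace_eigProj hσh hσ1, one_mul]
end

section
/- For every orthogonal projection Q, the function ρ ↦ F(ρ,Q) is concave on the set of density matrices: for all density matrices ρ₁, ρ₂ and all t ∈ [0,1], F(tρ₁ + (1−t)ρ₂, Q) ≥ t·F(ρ₁,Q) + (1−t)·F(ρ₂,Q). -/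
open Matrix
open scoped ComplexOrder

private lemma scale_log_div (r x S : ℝ) (hr : 0 < r) (hxS : S = 0 → x = 0) :
    (r * x) * Real.log ((r * x) / (r * S)) = r * (x * Real.log (x / S)) := by
  rcases eq_or_ne x 0 with hx | hx
  · simp [hx]
  · have hS : S ≠ 0 := fun h => hx (hxS h)
    rw [mul_div_mul_left _ _ (ne_of_gt hr)]
    ring

private lemma logsum (p q a b S T : ℝ) (hp : 0 ≤ p) (hq : 0 ≤ q)
    (ha : 0 ≤ a) (hb : 0 ≤ b) (hS : 0 ≤ S) (hT : 0 ≤ T)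
    (haS : S = 0 → a = 0) (hbT : T = 0 → b = 0) :
    (p*a+q*b) * Real.log ((p*a+q*b)/(p*S+q*T)) ≤
      p*(a*Real.log (a/S)) + q*(b*Real.log (b/T)) := by
  rcases eq_or_lt_of_le hp with hp0 | hp0
  · rcases eq_or_lt_of_le hq with hq0 | hq0
    · simp [← hp0, ← hq0]
    · rw [← hp0]
      simp only [zero_mul, zero_add]
      rw [scale_log_div q b T hq0 hbT]
  · rcases eq_or_lt_of_le hq with hq0 | hq0
    · rw [← hq0]
      simp only [zero_mul, add_zero]
      rw [scale_log_div p a S hp0 haS]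
    · rcases eq_or_ne S 0 with hS0 | hS0
      · have ha0 : a = 0 := haS hS0
        simp only [hS0, ha0, mul_zero, zero_add]
        rw [scale_log_div q b T hq0 hbT]
        simp
      · rcases eq_or_ne T 0 with hT0 | hT0
        · have hb0 : b = 0 := hbT hT0
          simp only [hT0, hb0, mul_zero, add_zero]
          rw [scale_log_div p a S hp0 haS]
          simp
        · have hSpos : 0 < S := lt_of_le_of_ne hS (Ne.symm hS0)
          have hTpos : 0 < T := lt_of_le_of_ne hT (Ne.symm hT0)
          have hD : 0 < p*S + q*T := by positivity
          have huv : p*S/(p*S+q*T) + q*T/(p*S+q*T) = 1 := by field_simp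
          have key := Real.convexOn_mul_log.2 (Set.mem_Ici.2 (div_nonneg ha hS))
            (Set.mem_Ici.2 (div_nonneg hb hT)) (by positivity) (by positivity) huv
          simp only [smul_eq_mul] at key
          have hpt : p*S/(p*S+q*T) * (a/S) + q*T/(p*S+q*T) * (b/T) = (p*a+q*b)/(p*S+q*T) := by
            field_simp
          rw [hpt] at key
          have key2 := mul_le_mul_of_nonneg_left key hD.le
          generalize hL : Real.log ((p*a+q*b)/(p*S+q*T)) = L at *
          generalize hLa : Real.log (a/S) = La at *
          generalize hLb : Real.log (b/T) = Lb at *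
          have e1 : (p*S+q*T) * ((p*a+q*b)/(p*S+q*T) * L) = (p*a+q*b) * L := by
            field_simp
          have e2 : (p*S+q*T) * (p*S/(p*S+q*T) * (a/S*La) + q*T/(p*S+q*T) * (b/T*Lb))
              = p*(a*La) + q*(b*Lb) := by
            field_simp
          rw [e1, e2] at key2
          exact key2


private lemma negMulLog_sum_eq {x S : ℝ} (hxS : S = 0 → x = 0) :
    Real.negMulLog x = -(x * Real.log (x / S)) - x * Real.log S := by
  rcases eq_or_ne x 0 with h | h
  · simp [h]
  · have hS0 : S ≠ 0 := fun hh => h (hxS hh)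
    rw [Real.negMulLog, Real.log_div h hS0]
    ring

private lemma Fcl_eq {n : ℕ} (x : Fin n → ℝ) (hx : ∀ i, 0 ≤ x i) :
    ∑ i, Real.negMulLog (x i) + (∑ i, x i) * Real.log (∑ i, x i)
      = -∑ i, x i * Real.log (x i / ∑ j, x j) := by
  have hxS : ∀ i, (∑ j, x j) = 0 → x i = 0 := fun i h =>
    (Finset.sum_eq_zero_iff_of_nonneg (fun j _ => hx j)).1 h i (Finset.mem_univ i)
  rw [Finset.sum_congr rfl (fun i _ => negMulLog_sum_eq (hxS i))]
  rw [Finset.sum_sub_distrib, ← Finset.sum_mul, Finset.sum_neg_distrib]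
  ring

private lemma classical_step {n : ℕ} (a b : Fin n → ℝ) (ha : ∀ i, 0 ≤ a i)
    (hb : ∀ i, 0 ≤ b i) (t : ℝ) (ht0 : 0 ≤ t) (ht1 : t ≤ 1) :
    t * (∑ i, Real.negMulLog (a i) + (∑ i, a i) * Real.log (∑ i, a i))
      + (1-t) * (∑ i, Real.negMulLog (b i) + (∑ i, b i) * Real.log (∑ i, b i))
    ≤ ∑ i, Real.negMulLog (t * a i + (1-t) * b i)
      + (∑ i, (t * a i + (1-t) * b i)) * Real.log (∑ i, (t * a i + (1-t) * b i)) := by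
  have hd : ∀ i, 0 ≤ t * a i + (1-t) * b i := fun i => by
    have := ha i; have := hb i; nlinarith
  rw [Fcl_eq a ha, Fcl_eq b hb, Fcl_eq _ hd]
  have hSa : 0 ≤ ∑ j, a j := Finset.sum_nonneg fun j _ => ha j
  have hSb : 0 ≤ ∑ j, b j := Finset.sum_nonneg fun j _ => hb j
  have hSd : ∑ j, (t * a j + (1-t)*b j) = t * ∑ j, a j + (1-t) * ∑ j, b j := by
    rw [Finset.sum_add_distrib, ← Finset.mul_sum, ← Finset.mul_sum]
  have key : ∑ i, (t * a i + (1-t)*b i) *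
        Real.log ((t*a i+(1-t)*b i)/(t*(∑ j, a j)+(1-t)*(∑ j, b j)))
      ≤ ∑ i, (t*(a i * Real.log (a i / ∑ j, a j))
        + (1-t)*(b i * Real.log (b i / ∑ j, b j))) :=
    Finset.sum_le_sum fun i _ => logsum t (1-t) (a i) (b i) _ _ ht0 (by linarith)
      (ha i) (hb i) hSa hSb
      (fun h => (Finset.sum_eq_zero_iff_of_nonneg (fun j _ => ha j)).1 h i (Finset.mem_univ i))
      (fun h => (Finset.sum_eq_zero_iff_of_nonneg (fun j _ => hb j)).1 h i (Finset.mem_univ i))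
  rw [Finset.sum_add_distrib, ← Finset.mul_sum, ← Finset.mul_sum] at key
  rw [hSd]
  linarith

private lemma diag_re_nonneg {n : ℕ} {M : Matrix (Fin n) (Fin n) ℂ} (hM : M.PosSemidef)
    (i : Fin n) : 0 ≤ (M i i).re := by
  have h := hM.dotProduct_mulVec_nonneg (Pi.single i 1)
  have he : star (Pi.single i 1 : Fin n → ℂ) ⬝ᵥ (M *ᵥ Pi.single i 1) = M i i := by
    have : star (Pi.single i 1 : Fin n → ℂ) = Pi.single i 1 := by
      funext j
      rcases eq_or_ne j i with rfl | hj <;> simp [Pi.single_apply, *]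
    rw [this]
    simp [single_dotProduct, Matrix.mulVec_single]
  rw [he] at h
  exact (Complex.le_def.1 h).1

private lemma eta_eq_sum {n : ℕ} {M : Matrix (Fin n) (Fin n) ℂ} (hM : M.IsHermitian) :
    eta M = ∑ i, Real.negMulLog (hM.eigenvalues i) := by
  rw [eta, dif_pos hM]
  simp [Real.negMulLog]

/-- Pinching inequality. -/
private lemma pinch {n : ℕ} {M : Matrix (Fin n) (Fin n) ℂ} (hM : M.PosSemidef)
    (U : Matrix (Fin n) (Fin n) ℂ) (hU : U ∈ Matrix.unitaryGroup (Fin n) ℂ) :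
    eta M ≤ ∑ i, Real.negMulLog ((star U * M * U) i i).re := by
  classical
  have hH : M.IsHermitian := hM.1
  set V : Matrix (Fin n) (Fin n) ℂ := (hH.eigenvectorUnitary : Matrix (Fin n) (Fin n) ℂ) with hV
  set lam : Fin n → ℝ := hH.eigenvalues with hlam
  set W : Matrix (Fin n) (Fin n) ℂ := star U * V with hW
  have hVmem := hH.eigenvectorUnitary.2
  have hWrow : W * star W = 1 := by
    have h1 : V * star V = 1 := Matrix.mem_unitaryGroup_iff.mp hVmem
    have h2 : star U * U = 1 := Matrix.mem_unitaryGroup_iff'.mp hU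
    have h2' : U * star U = 1 := Matrix.mem_unitaryGroup_iff.mp hU
    calc W * star W = star U * (V * star V) * U := by
          simp [hW, Matrix.star_mul, Matrix.mul_assoc]
      _ = 1 := by rw [h1, Matrix.mul_one, h2]
  have hWcol : star W * W = 1 := by
    have h1 : star V * V = 1 := Matrix.mem_unitaryGroup_iff'.mp hVmem
    have h2' : U * star U = 1 := Matrix.mem_unitaryGroup_iff.mp hU
    calc star W * W = star V * (U * star U) * V := by
          simp [hW, Matrix.star_mul, Matrix.mul_assoc]
      _ = 1 := by rw [h2', Matrix.mul_one, h1]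
  -- diagonal entries
  set D : Matrix (Fin n) (Fin n) ℂ := Matrix.diagonal (RCLike.ofReal ∘ lam) with hD
  have hdiag : ∀ i, ((star U * M * U) i i).re = ∑ j, Complex.normSq (W i j) * lam j := by
    intro i
    have hrep : star U * M * U = W * D * star W := by
      conv_lhs => rw [hH.spectral_theorem]
      simp only [hW, Matrix.star_mul, star_star, Matrix.mul_assoc, hD, hV, hlam, Unitary.conjStarAlgAut_apply]
    have e : ∀ j, (W * D) i j * (star W) j i
        = ((lam j : ℂ) * (Complex.normSq (W i j) : ℂ)) := by
      intro j
      rw [hD, Matrix.mul_diagonal]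
      have h1 : (star W) j i = starRingEnd ℂ (W i j) := by
        simp [Matrix.star_eq_conjTranspose, Matrix.conjTranspose_apply]
      rw [h1]
      have h2 : (RCLike.ofReal ∘ lam) j = ((lam j : ℂ)) := rfl
      rw [h2, mul_comm (W i j) _, mul_assoc, Complex.mul_conj]
    rw [hrep, Matrix.mul_apply, Finset.sum_congr rfl fun j _ => e j, Complex.re_sum]
    refine Finset.sum_congr rfl fun j _ => ?_
    simp [mul_comm]
  -- row sums and column sums of |W i j|^2
  have hrowsum : ∀ i, ∑ j, Complex.normSq (W i j) = 1 := by
    intro i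
    have : (W * star W) i i = 1 := by rw [hWrow]; simp
    rw [Matrix.mul_apply] at this
    have e : ∀ j, W i j * (star W) j i = (Complex.normSq (W i j) : ℂ) := by
      intro j
      have : (star W) j i = starRingEnd ℂ (W i j) := by
        simp [Matrix.star_eq_conjTranspose, Matrix.conjTranspose_apply]
      rw [this, Complex.mul_conj]
    rw [Finset.sum_congr rfl fun j _ => e j] at this
    have := congrArg Complex.re this
    rw [Complex.re_sum] at this
    simpa using this
  have hcolsum : ∀ j, ∑ i, Complex.normSq (W i j) = 1 := by
    intro j
    have : (star W * W) j j = 1 := by rw [hWcol]; simp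
    rw [Matrix.mul_apply] at this
    have e : ∀ i, (star W) j i * W i j = (Complex.normSq (W i j) : ℂ) := by
      intro i
      have h1 : (star W) j i = starRingEnd ℂ (W i j) := by
        simp [Matrix.star_eq_conjTranspose, Matrix.conjTranspose_apply]
      rw [h1, mul_comm, Complex.mul_conj]
    rw [Finset.sum_congr rfl fun i _ => e i] at this
    have := congrArg Complex.re this
    rw [Complex.re_sum] at this
    simpa using this
  -- Jensen per row
  have jensen : ∀ i, ∑ j, Complex.normSq (W i j) * Real.negMulLog (lam j)
      ≤ Real.negMulLog ((star U * M * U) i i).re := by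
    intro i
    have := Real.concaveOn_negMulLog.le_map_sum (t := Finset.univ)
      (w := fun j => Complex.normSq (W i j)) (p := lam)
      (fun j _ => Complex.normSq_nonneg _) (hrowsum i)
      (fun j _ => Set.mem_Ici.2 (hM.eigenvalues_nonneg j))
    simp only [smul_eq_mul] at this
    rw [hdiag i]
    exact this
  calc eta M = ∑ j, Real.negMulLog (lam j) := eta_eq_sum hH
    _ = ∑ j, (∑ i, Complex.normSq (W i j)) * Real.negMulLog (lam j) := by
        refine Finset.sum_congr rfl fun j _ => ?_
        rw [hcolsum j, one_mul]
    _ = ∑ i, ∑ j, Complex.normSq (W i j) * Real.negMulLog (lam j) := by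
        rw [Finset.sum_comm]
        simp_rw [Finset.sum_mul]
    _ ≤ ∑ i, Real.negMulLog ((star U * M * U) i i).re :=
        Finset.sum_le_sum fun i _ => jensen i

/-- For every orthogonal projection `Q`, the map `ρ ↦ F(ρ,Q)` is concave
on density matrices. -/
theorem condF_concave {n : ℕ} (hn : 1 ≤ n)
    (Q : Matrix (Fin n) (Fin n) ℂ) (hQ : Qᴴ = Q) (hQ2 : Q * Q = Q)
    (ρ₁ ρ₂ : Matrix (Fin n) (Fin n) ℂ)
    (h₁ : ρ₁.PosSemidef) (h₁1 : ρ₁.trace = 1)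
    (h₂ : ρ₂.PosSemidef) (h₂1 : ρ₂.trace = 1)
    (t : ℝ) (ht0 : 0 ≤ t) (ht1 : t ≤ 1) :
    t * condF ρ₁ Q + (1 - t) * condF ρ₂ Q ≤ condF (t • ρ₁ + (1 - t) • ρ₂) Q := by
  classical
  set ρ : Matrix (Fin n) (Fin n) ℂ := t • ρ₁ + (1 - t) • ρ₂ with hρ
  set A : Matrix (Fin n) (Fin n) ℂ := Q * ρ₁ * Q with hAdef
  set B : Matrix (Fin n) (Fin n) ℂ := Q * ρ₂ * Q with hBdef
  set C : Matrix (Fin n) (Fin n) ℂ := Q * ρ * Q with hCdef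
  have hA : A.PosSemidef := by
    have := h₁.mul_mul_conjTranspose_same Q; rwa [hQ] at this
  have hB : B.PosSemidef := by
    have := h₂.mul_mul_conjTranspose_same Q; rwa [hQ] at this
  have hCAB : C = t • A + (1-t) • B := by
    rw [hCdef, hρ, hAdef, hBdef]
    rw [Matrix.mul_add, Matrix.add_mul, Matrix.mul_smul, Matrix.mul_smul,
      Matrix.smul_mul, Matrix.smul_mul]
  have hCH : C.IsHermitian := by
    show Cᴴ = C
    rw [hCAB, Matrix.conjTranspose_add, Matrix.conjTranspose_smul,
      Matrix.conjTranspose_smul, star_trivial, star_trivial, hA.1, hB.1]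
  set U : Matrix (Fin n) (Fin n) ℂ := (hCH.eigenvectorUnitary : Matrix (Fin n) (Fin n) ℂ)
    with hUdef
  have hUmem : U ∈ Matrix.unitaryGroup (Fin n) ℂ := hCH.eigenvectorUnitary.2
  have hdiagC : star U * C * U = Matrix.diagonal (RCLike.ofReal ∘ hCH.eigenvalues) :=
    by rw [← hCH.conjStarAlgAut_star_eigenvectorUnitary, Unitary.conjStarAlgAut_star_apply]
  set c : Fin n → ℝ := hCH.eigenvalues with hcdef
  set a : Fin n → ℝ := fun i => ((star U * A * U) i i).re with hadef
  set b : Fin n → ℝ := fun i => ((star U * B * U) i i).re with hbdef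
  have hsplit : star U * C * U = t • (star U * A * U) + (1-t) • (star U * B * U) := by
    rw [hCAB, Matrix.mul_add, Matrix.add_mul, Matrix.mul_smul, Matrix.mul_smul,
      Matrix.smul_mul, Matrix.smul_mul]
  have hc : ∀ i, c i = t * a i + (1-t) * b i := by
    intro i
    have h1 : ((star U * C * U) i i).re = c i := by
      rw [hdiagC]
      simp [Matrix.diagonal_apply_eq]
    have h2 : ((star U * C * U) i i).re = t * a i + (1-t) * b i := by
      rw [hsplit]
      simp only [Matrix.add_apply, Matrix.smul_apply, Complex.add_re, Complex.real_smul,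
        Complex.mul_re, Complex.ofReal_re, Complex.ofReal_im, hadef, hbdef]
      ring
    rw [← h1, h2]
  have hAU : (star U * A * U).PosSemidef := by
    have := hA.mul_mul_conjTranspose_same (star U)
    rwa [Matrix.star_eq_conjTranspose, Matrix.conjTranspose_conjTranspose] at this
  have hBU : (star U * B * U).PosSemidef := by
    have := hB.mul_mul_conjTranspose_same (star U)
    rwa [Matrix.star_eq_conjTranspose, Matrix.conjTranspose_conjTranspose] at this
  have ha : ∀ i, 0 ≤ a i := fun i => diag_re_nonneg hAU i
  have hb : ∀ i, 0 ≤ b i := fun i => diag_re_nonneg hBU i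
  have trace_eq : ∀ (M : Matrix (Fin n) (Fin n) ℂ), (star U * M * U).trace = M.trace := by
    intro M
    rw [Matrix.trace_mul_cycle, Matrix.mem_unitaryGroup_iff.mp hUmem, Matrix.one_mul]
  have hSa : A.trace.re = ∑ i, a i := by
    rw [← trace_eq A, Matrix.trace]
    simp [Matrix.diag, Complex.re_sum, hadef]
  have hSb : B.trace.re = ∑ i, b i := by
    rw [← trace_eq B, Matrix.trace]
    simp [Matrix.diag, Complex.re_sum, hbdef]
  have hSc : C.trace.re = ∑ i, c i := by
    rw [← trace_eq C, hdiagC, Matrix.trace]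
    simp [Matrix.diag, Complex.re_sum]
  have pinchA : eta A ≤ ∑ i, Real.negMulLog (a i) := pinch hA U hUmem
  have pinchB : eta B ≤ ∑ i, Real.negMulLog (b i) := pinch hB U hUmem
  have hetaC : eta C = ∑ i, Real.negMulLog (c i) := eta_eq_sum hCH
  have FA : condF ρ₁ Q ≤ ∑ i, Real.negMulLog (a i) + (∑ i, a i) * Real.log (∑ i, a i) := by
    unfold condF
    rw [← hAdef, hSa]
    linarith
  have FB : condF ρ₂ Q ≤ ∑ i, Real.negMulLog (b i) + (∑ i, b i) * Real.log (∑ i, b i) := by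
    unfold condF
    rw [← hBdef, hSb]
    linarith
  have FC : condF ρ Q = ∑ i, Real.negMulLog (c i) + (∑ i, c i) * Real.log (∑ i, c i) := by
    unfold condF
    rw [← hCdef, hSc, hetaC]
  calc t * condF ρ₁ Q + (1 - t) * condF ρ₂ Q
      ≤ t * (∑ i, Real.negMulLog (a i) + (∑ i, a i) * Real.log (∑ i, a i))
        + (1-t) * (∑ i, Real.negMulLog (b i) + (∑ i, b i) * Real.log (∑ i, b i)) := by
        have h1 := mul_le_mul_of_nonneg_left FA ht0
        have h2 := mul_le_mul_of_nonneg_left FB (by linarith : (0:ℝ) ≤ 1 - t)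
        linarith
    _ ≤ ∑ i, Real.negMulLog (t * a i + (1-t) * b i)
        + (∑ i, (t * a i + (1-t) * b i)) * Real.log (∑ i, (t * a i + (1-t) * b i)) :=
        classical_step a b ha hb t ht0 ht1
    _ = condF ρ Q := by
        rw [FC]
        have e : ∀ i, t * a i + (1-t) * b i = c i := fun i => (hc i).symm
        simp_rw [e]
end

section
/- For every density matrix ρ and every orthogonal projection Q, the inequality F(ρ,Q) ≤ S(ρ) holds. -/
open Matrix
open scoped ComplexOrder

section Aux
open Polynomial

lemma my_charpoly_conj {m : Type*} [Fintype m] [DecidableEq m] {R : Type*} [CommRing R]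
    (P M Q : Matrix m m R) (h : P * Q = 1) : (P * M * Q).charpoly = M.charpoly := by
  set f : Matrix m m R →+* Matrix m m R[X] := (C : R →+* R[X]).mapMatrix with hf
  have hPQ : f P * f Q = 1 := by rw [← _root_.map_mul, h, _root_.map_one]
  have hscal : f P * Matrix.scalar m (X : R[X]) * f Q = Matrix.scalar m (X : R[X]) := by
    rw [← (Matrix.scalar_commute (X : R[X]) (fun r => Commute.all _ _) (f P)).eq, mul_assoc, hPQ,
      mul_one]
  have key : f P * charmatrix M * f Q = charmatrix (P * M * Q) := by
    rw [charmatrix, charmatrix, mul_sub, sub_mul, hscal]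
    rw [hf, ← _root_.map_mul, ← _root_.map_mul]
  rw [Matrix.charpoly, Matrix.charpoly, ← key, det_mul, det_mul, mul_right_comm, ← det_mul, hPQ,
    det_one, one_mul]

lemma my_charpoly_diagonal {m : Type*} [Fintype m] [DecidableEq m] {R : Type*} [CommRing R]
    (d : m → R) : (diagonal d).charpoly = ∏ i, (X - C (d i)) := by
  have h : charmatrix (diagonal d) = diagonal (fun i => (X : R[X]) - C (d i)) := by
    ext i j
    by_cases hij : i = j
    · subst hij; simp
    · rw [charmatrix_apply_ne _ _ _ hij, diagonal_apply_ne _ hij, diagonal_apply_ne _ hij, map_zero,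
        neg_zero]
  rw [Matrix.charpoly, h, det_diagonal]

lemma my_charpoly_mul_comm {m : Type*} [Fintype m] [DecidableEq m] (A B : Matrix m m ℂ) :
    (A * B).charpoly = (B * A).charpoly := by
  have hP : (fromBlocks 1 A 0 1 : Matrix (m ⊕ m) (m ⊕ m) ℂ) * fromBlocks 1 (-A) 0 1 = 1 := by
    rw [fromBlocks_multiply]
    simp [← fromBlocks_one]
  have hsim : fromBlocks 1 A 0 1 * fromBlocks 0 0 B (B*A) * fromBlocks 1 (-A) 0 1
      = (fromBlocks (A*B) 0 B 0 : Matrix (m ⊕ m) (m ⊕ m) ℂ) := by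
    rw [fromBlocks_multiply, fromBlocks_multiply]
    simp [mul_assoc]
  have h1 : (fromBlocks (A*B) 0 B 0 : Matrix (m ⊕ m) (m ⊕ m) ℂ).charpoly
      = (A*B).charpoly * (0 : Matrix m m ℂ).charpoly := charpoly_fromBlocks_zero₁₂ _ _ _
  have h2 : (fromBlocks 0 0 B (B*A) : Matrix (m ⊕ m) (m ⊕ m) ℂ).charpoly
      = (0 : Matrix m m ℂ).charpoly * (B*A).charpoly := charpoly_fromBlocks_zero₁₂ _ _ _
  have h3 := my_charpoly_conj (fromBlocks 1 A 0 1) (fromBlocks 0 0 B (B*A))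
    (fromBlocks 1 (-A) 0 1) hP
  rw [hsim, h1, h2] at h3
  have hmon : (0 : Matrix m m ℂ).charpoly ≠ 0 := (Matrix.charpoly_monic _).ne_zero
  apply mul_left_cancel₀ hmon
  rw [mul_comm] at h3
  rw [← h3, mul_comm]

lemma my_charpoly_isHermitian {m : Type*} [Fintype m] [DecidableEq m] {A : Matrix m m ℂ}
    (hA : A.IsHermitian) : A.charpoly = ∏ i, (X - C ((hA.eigenvalues i : ℂ))) := by
  conv_lhs => rw [hA.spectral_theorem, Unitary.conjStarAlgAut_apply]
  rw [my_charpoly_conj _ _ _ (mem_unitaryGroup_iff.mp hA.eigenvectorUnitary.2),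
    my_charpoly_diagonal]
  rfl

lemma my_sum_f_eigenvalues_eq {m : Type*} [Fintype m] [DecidableEq m] {A B : Matrix m m ℂ}
    (hA : A.IsHermitian) (hB : B.IsHermitian) (h : A.charpoly = B.charpoly) (f : ℝ → ℝ) :
    ∑ i, f (hA.eigenvalues i) = ∑ i, f (hB.eigenvalues i) := by
  have hprod : ∀ (g : m → ℂ), (∏ i, (X - C (g i)))
      = ((Finset.univ.val.map g).map (fun r => X - C r)).prod := by
    intro g; rw [Finset.prod_eq_multiset_prod, Multiset.map_map]; rfl
  have hmulti : Multiset.map (fun i => ((hA.eigenvalues i : ℝ) : ℂ)) Finset.univ.val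
      = Multiset.map (fun i => ((hB.eigenvalues i : ℝ) : ℂ)) Finset.univ.val := by
    have h' := h
    rw [my_charpoly_isHermitian hA, my_charpoly_isHermitian hB, hprod, hprod] at h'
    have := congrArg Polynomial.roots h'
    rwa [roots_multiset_prod_X_sub_C, roots_multiset_prod_X_sub_C] at this
  have hre : ∀ (e : m → ℝ), ∑ i, f (e i)
      = (Multiset.map (fun z : ℂ => f z.re) (Multiset.map (fun i => ((e i : ℝ) : ℂ))
          Finset.univ.val)).sum := by
    intro e
    rw [Multiset.map_map, Finset.sum_eq_multiset_sum]
    congr 1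
  rw [hre, hre, hmulti]


lemma my_log_ineq {c μ lam t : ℝ} (hc : 0 ≤ c) (hμ : 0 ≤ μ) (hlam : 0 ≤ lam) (hμt : μ ≤ t)
    (hsupp : c * μ = 0 ∨ 0 < lam) :
    c * μ * (Real.log t + Real.log lam - Real.log μ) ≤ c * (t * lam - μ) := by
  rcases hμ.eq_or_lt with hμ0 | hμpos
  · rw [← hμ0]
    simp only [mul_zero, zero_mul, sub_zero]
    have ht : 0 ≤ t := hμ0 ▸ hμt
    positivity
  rcases hc.eq_or_lt with hc0 | hcpos
  · rw [← hc0]; simp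
  have hlampos : 0 < lam := by
    rcases hsupp with h | h
    · nlinarith
    · exact h
  have htpos : 0 < t := lt_of_lt_of_le hμpos hμt
  have hlog : Real.log t + Real.log lam - Real.log μ = Real.log (t * lam / μ) := by
    rw [Real.log_div (by positivity) hμpos.ne', Real.log_mul htpos.ne' hlampos.ne']
  rw [hlog]
  have h1 : Real.log (t * lam / μ) ≤ t * lam / μ - 1 :=
    Real.log_le_sub_one_of_pos (by positivity)
  calc c * μ * Real.log (t*lam/μ) ≤ c * μ * (t*lam/μ - 1) :=
        mul_le_mul_of_nonneg_left h1 (by positivity)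
    _ = c * (t*lam - μ) := by field_simp


lemma my_key_ineq {n : ℕ} (ρ M : Matrix (Fin n) (Fin n) ℂ) (hρ : ρ.PosSemidef)
    (hM : M.PosSemidef) (hle : (ρ - M).PosSemidef) (hρ1 : ρ.trace = 1) :
    (-∑ i, hM.1.eigenvalues i * Real.log (hM.1.eigenvalues i)) +
      M.trace.re * Real.log M.trace.re
      ≤ -∑ i, hρ.1.eigenvalues i * Real.log (hρ.1.eigenvalues i) := by
  classical
  set μ := hM.1.eigenvalues with hμdef
  set lam := hρ.1.eigenvalues with hlamdef
  set U := (hM.1.eigenvectorUnitary : Matrix (Fin n) (Fin n) ℂ) with hUdef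
  set V := (hρ.1.eigenvectorUnitary : Matrix (Fin n) (Fin n) ℂ) with hVdef
  set W := star V * U with hWdef
  set c : Fin n → Fin n → ℝ := fun j i => Complex.normSq (W j i) with hcdef
  have hc0 : ∀ j i, 0 ≤ c j i := fun j i => Complex.normSq_nonneg _
  have hμ0 : ∀ i, 0 ≤ μ i := hM.eigenvalues_nonneg
  have hlam0 : ∀ j, 0 ≤ lam j := hρ.eigenvalues_nonneg
  have hVsV : star V * V = 1 := mem_unitaryGroup_iff'.mp hρ.1.eigenvectorUnitary.2
  have hVVs : V * star V = 1 := mem_unitaryGroup_iff.mp hρ.1.eigenvectorUnitary.2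
  have hUsU : star U * U = 1 := mem_unitaryGroup_iff'.mp hM.1.eigenvectorUnitary.2
  have hUUs : U * star U = 1 := mem_unitaryGroup_iff.mp hM.1.eigenvectorUnitary.2
  have hWs : star W = star U * V := by rw [hWdef, StarMul.star_mul, star_star]
  have hWWs : W * star W = 1 := by
    rw [hWs, hWdef, mul_assoc, ← mul_assoc U, hUUs, one_mul, hVsV]
  have hWsW : star W * W = 1 := by
    rw [hWs, hWdef, mul_assoc, ← mul_assoc V, hVVs, one_mul, hUsU]
  -- row sums of c are 1
  have hrow : ∀ j, ∑ i, c j i = 1 := by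
    intro j
    have h1 := congrFun (congrFun hWWs j) j
    rw [Matrix.mul_apply] at h1
    rw [Matrix.one_apply_eq] at h1
    have h2 : ∑ i, ((c j i : ℝ) : ℂ) = 1 := by
      rw [← h1]
      exact Finset.sum_congr rfl fun i _ => by
        rw [Matrix.star_apply, RCLike.star_def, Complex.mul_conj]
    exact_mod_cast (Complex.ofReal_sum Finset.univ (fun i => c j i)) ▸ h2
  -- column sums of c are 1
  have hcol : ∀ i, ∑ j, c j i = 1 := by
    intro i
    have h1 := congrFun (congrFun hWsW i) i
    rw [Matrix.mul_apply] at h1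
    rw [Matrix.one_apply_eq] at h1
    have h2 : ∑ j, ((c j i : ℝ) : ℂ) = 1 := by
      rw [← h1]
      exact Finset.sum_congr rfl fun j _ => by
        rw [Matrix.star_apply, RCLike.star_def, mul_comm, Complex.mul_conj]
    exact_mod_cast (Complex.ofReal_sum Finset.univ (fun j => c j i)) ▸ h2
  -- diagonalization of ρ
  have hρdiag : star V * ρ * V = diagonal (fun j => ((lam j : ℝ) : ℂ)) :=
    by have := hρ.1.conjStarAlgAut_star_eigenvectorUnitary; rwa [Unitary.conjStarAlgAut_star_apply] at this
  -- (star V * M * V) j j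
  have hsVMV : ∀ j, ((star V * M * V) j j).re = ∑ i, μ i * c j i := by
    intro j
    have hM' : star V * M * V = W * diagonal (fun i => ((μ i : ℝ) : ℂ)) * star W := by
      conv_lhs => rw [hM.1.spectral_theorem, Unitary.conjStarAlgAut_apply]
      rw [hWs, hWdef]
      have : diagonal (RCLike.ofReal ∘ μ) = diagonal (fun i => ((μ i : ℝ) : ℂ)) := rfl
      rw [this]
      noncomm_ring
    rw [hM', Matrix.mul_apply]
    have he : ∀ i, (W * diagonal (fun i => ((μ i : ℝ) : ℂ))) j i * (star W) i j
        = ((μ i * c j i : ℝ) : ℂ) := by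
      intro i
      rw [Matrix.mul_diagonal, Matrix.star_apply, RCLike.star_def, hcdef]
      push_cast
      rw [mul_comm (W j i) _, mul_assoc, Complex.mul_conj]
    rw [Finset.sum_congr rfl fun i _ => he i, ← Complex.ofReal_sum, Complex.ofReal_re]
  -- s j ≤ lam j
  have hsle : ∀ j, ∑ i, μ i * c j i ≤ lam j := by
    intro j
    have hpsd : (Vᴴ * (ρ - M) * V).PosSemidef := hle.conjTranspose_mul_mul_same V
    have hdiagentry : 0 ≤ ((Vᴴ * (ρ - M) * V) j j).re := by
      have h0 := hpsd.re_dotProduct_nonneg (Pi.single j 1 : Fin n → ℂ)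
      have hx : star (Pi.single j 1 : Fin n → ℂ) = Pi.single j 1 := by
        ext k; by_cases h : k = j <;> simp [Pi.single_apply, h]
      rwa [hx, Matrix.mulVec_single, single_dotProduct, one_mul, MulOpposite.op_one, one_smul] at h0
    have hsplit : Vᴴ * (ρ - M) * V = diagonal (fun j => ((lam j : ℝ) : ℂ)) - star V * M * V := by
      rw [← Matrix.star_eq_conjTranspose, ← hρdiag, Matrix.mul_sub, Matrix.sub_mul]
    rw [hsplit] at hdiagentry
    have : ((diagonal (fun j => ((lam j : ℝ) : ℂ)) - star V * M * V) j j).re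
        = lam j - ∑ i, μ i * c j i := by
      rw [Matrix.sub_apply, Complex.sub_re, diagonal_apply_eq, Complex.ofReal_re, hsVMV j]
    linarith [this ▸ hdiagentry]
  -- trace identities
  have htrdiag : ∀ (B : Matrix (Fin n) (Fin n) ℂ) (hB : B.IsHermitian),
      B.trace = ((∑ i, hB.eigenvalues i : ℝ) : ℂ) := by
    intro B hB
    conv_lhs => rw [hB.spectral_theorem, Unitary.conjStarAlgAut_apply]
    rw [Matrix.trace_mul_cycle, mem_unitaryGroup_iff'.mp hB.eigenvectorUnitary.2, one_mul,
      Matrix.trace_diagonal]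
    push_cast
    rfl
  have hlamsum : ∑ j, lam j = 1 := by
    have h1 := htrdiag ρ hρ.1
    rw [hρ1] at h1
    exact_mod_cast h1.symm
  have htr : M.trace.re = ∑ i, μ i := by rw [htrdiag M hM.1, Complex.ofReal_re]
  set t := ∑ i, μ i with htdef
  have hlam1 : ∀ j, lam j ≤ 1 := by
    intro j
    rw [← hlamsum]
    exact Finset.single_le_sum (fun k _ => hlam0 k) (Finset.mem_univ j)
  have hμt : ∀ i, μ i ≤ t := fun i =>
    Finset.single_le_sum (fun k _ => hμ0 k) (Finset.mem_univ i)
  have hsupp : ∀ j i, c j i * μ i = 0 ∨ 0 < lam j := by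
    intro j i
    rcases (hlam0 j).eq_or_lt with h0 | hpos
    · left
      have h1 : ∑ i', μ i' * c j i' ≤ 0 := h0 ▸ hsle j
      have h2 : ∀ i' ∈ Finset.univ, 0 ≤ μ i' * c j i' :=
        fun i' _ => mul_nonneg (hμ0 i') (hc0 j i')
      have h3 : ∑ i', μ i' * c j i' = 0 := le_antisymm h1 (Finset.sum_nonneg h2)
      have h4 := (Finset.sum_eq_zero_iff_of_nonneg h2).mp h3 i (Finset.mem_univ i)
      linarith [h4]
    · right; exact hpos
  -- main rearrangement identity
  have hA1 : ∑ j, ∑ i, c j i * (μ i * Real.log t) = t * Real.log t := by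
    rw [Finset.sum_comm]
    have h : ∀ i, ∑ j, c j i * (μ i * Real.log t) = μ i * Real.log t := by
      intro i; rw [← Finset.sum_mul, hcol, one_mul]
    rw [Finset.sum_congr rfl fun i _ => h i, ← Finset.sum_mul]
  have hA2 : ∑ j, ∑ i, c j i * (μ i * Real.log (μ i)) = ∑ i, μ i * Real.log (μ i) := by
    rw [Finset.sum_comm]
    refine Finset.sum_congr rfl fun i _ => ?_
    rw [← Finset.sum_mul, hcol, one_mul]
  have hident : ∑ j, ∑ i, c j i * μ i * (Real.log t + Real.log (lam j) - Real.log (μ i))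
      = ((-∑ i, μ i * Real.log (μ i)) + t * Real.log t)
        + ∑ j, (∑ i, μ i * c j i) * Real.log (lam j) := by
    have e1 : ∀ j i, c j i * μ i * (Real.log t + Real.log (lam j) - Real.log (μ i))
        = c j i * (μ i * Real.log t) - c j i * (μ i * Real.log (μ i))
          + (μ i * c j i) * Real.log (lam j) := by intro j i; ring
    simp only [e1, Finset.sum_add_distrib, Finset.sum_sub_distrib]
    rw [hA1, hA2]
    have h3 : ∀ j, ∑ i, (μ i * c j i) * Real.log (lam j)
        = (∑ i, μ i * c j i) * Real.log (lam j) := fun j => (Finset.sum_mul _ _ _).symm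
    rw [Finset.sum_congr rfl fun j _ => h3 j]
    ring
  have hbound : ∑ j, ∑ i, c j i * μ i * (Real.log t + Real.log (lam j) - Real.log (μ i)) ≤ 0 := by
    have hb1 : ∀ j, ∑ i, c j i * (t * lam j - μ i)
        = (∑ i, c j i) * (t * lam j) - ∑ i, c j i * μ i := by
      intro j
      simp only [mul_sub]
      rw [Finset.sum_sub_distrib, ← Finset.sum_mul]
    have hB : ∑ j, ∑ i, c j i * (t * lam j - μ i) = 0 := by
      rw [Finset.sum_congr rfl fun j _ => hb1 j, Finset.sum_sub_distrib]
      have hc1 : ∑ j, (∑ i, c j i) * (t * lam j) = t := by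
        have : ∀ j, (∑ i, c j i) * (t * lam j) = t * lam j := by
          intro j; rw [hrow, one_mul]
        rw [Finset.sum_congr rfl fun j _ => this j, ← Finset.mul_sum, hlamsum, mul_one]
      have hc2 : ∑ j, ∑ i, c j i * μ i = t := by
        rw [Finset.sum_comm]
        have : ∀ i, ∑ j, c j i * μ i = μ i := by
          intro i; rw [← Finset.sum_mul, hcol, one_mul]
        rw [Finset.sum_congr rfl fun i _ => this i]
      rw [hc1, hc2, sub_self]
    calc ∑ j, ∑ i, c j i * μ i * (Real.log t + Real.log (lam j) - Real.log (μ i))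
        ≤ ∑ j, ∑ i, c j i * (t * lam j - μ i) := by
          refine Finset.sum_le_sum fun j _ => Finset.sum_le_sum fun i _ => ?_
          exact my_log_ineq (hc0 j i) (hμ0 i) (hlam0 j) (hμt i) (hsupp j i)
      _ = 0 := hB
  have step2 : ∑ j, lam j * Real.log (lam j) ≤ ∑ j, (∑ i, μ i * c j i) * Real.log (lam j) :=
    Finset.sum_le_sum fun j _ =>
      mul_le_mul_of_nonpos_right (hsle j) (Real.log_nonpos (hlam0 j) (hlam1 j))
  rw [htr]
  linarith [hident ▸ hbound, step2]

end Aux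

/-- For every density matrix `ρ` and every orthogonal projection `Q`,
`F(ρ,Q) ≤ S(ρ)`. -/
theorem condF_le_entropy {n : ℕ} (hn : 1 ≤ n)
    (ρ Q : Matrix (Fin n) (Fin n) ℂ)
    (hρ : ρ.PosSemidef) (hρ1 : ρ.trace = 1)
    (hQ : Qᴴ = Q) (hQ2 : Q * Q = Q) :
    condF ρ Q ≤ eta ρ := by
  classical
  obtain ⟨R, hRsa, -, hRR'⟩ := CFC.exists_sqrt_of_isSelfAdjoint_of_quasispectrumRestricts
    (a := ρ) hρ.1.isSelfAdjoint
    (by open scoped MatrixOrder in exact QuasispectrumRestricts.nnreal_of_nonneg hρ.nonneg)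
  have hRH : Rᴴ = R := hRsa
  have hRR : R * R = ρ := hRR'
  set A := Q * R with hAdef
  have hAH : Aᴴ = R * Q := by rw [hAdef, conjTranspose_mul, hRH, hQ]
  have hQρQ : Q * ρ * Q = A * Aᴴ := by
    rw [hAH, hAdef, ← hRR]
    noncomm_ring
  set M := Aᴴ * A with hMdef
  have hMpsd : M.PosSemidef := posSemidef_conjTranspose_mul_self A
  have hQρQpsd : (Q * ρ * Q).PosSemidef := by
    rw [hQρQ]; exact posSemidef_self_mul_conjTranspose A
  have hch : (Q * ρ * Q).charpoly = M.charpoly := by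
    rw [hQρQ, hMdef]; exact my_charpoly_mul_comm A Aᴴ
  have htr : (Q * ρ * Q).trace = M.trace := by
    rw [hQρQ, hMdef]; exact trace_mul_comm A Aᴴ
  have hle : (ρ - M).PosSemidef := by
    have h1 : ρ - M = ((1 - Q) * R)ᴴ * ((1 - Q) * R) := by
      rw [conjTranspose_mul, conjTranspose_sub, conjTranspose_one, hQ, hRH, hMdef, hAH, hAdef,
        ← hRR]
      have hproj : (1 - Q) * (1 - Q) = 1 - Q := by
        simp [mul_sub, sub_mul, hQ2]
      calc R * R - R * Q * (Q * R) = R * (1 - Q) * R := by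
            rw [mul_sub, sub_mul, mul_one]
            rw [show R * Q * (Q * R) = R * (Q * Q) * R by noncomm_ring, hQ2]
        _ = R * (1 - Q) * ((1 - Q) * R) := by
            rw [show R * (1 - Q) * ((1 - Q) * R) = R * ((1 - Q) * (1 - Q)) * R by noncomm_ring,
              hproj]
    rw [h1]
    exact posSemidef_conjTranspose_mul_self _
  have hηeq : ∑ i, (fun x => x * Real.log x) (hQρQpsd.1.eigenvalues i)
      = ∑ i, (fun x => x * Real.log x) (hMpsd.1.eigenvalues i) :=
    my_sum_f_eigenvalues_eq hQρQpsd.1 hMpsd.1 hch (fun x => x * Real.log x)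
  have hkey := my_key_ineq ρ M hρ hMpsd hle hρ1
  rw [condF, eta, eta, dif_pos hρ.1, dif_pos hQρQpsd.1, htr]
  simp only at hηeq
  rw [hηeq]
  exact hkey
end

section
/- Let ρ be a density matrix and Q an orthogonal projection. Then QρQ is a scalar multiple (possibly zero) of a rank-one orthogonal projection if and only if Q can be written as Q = Q′ + Q″, where Q′ and Q″ are orthogonal projections with Q′Q″ = 0, rank Q′ ≤ 1, and ρQ″ = 0. -/
open Matrix
open scoped ComplexOrder

lemma psd_rank_le_one {n : ℕ} {S : Matrix (Fin n) (Fin n) ℂ} (hS : S.PosSemidef)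
    (hr : S.rank ≤ 1) :
    ∃ c : ℝ, S.trace = (c : ℂ) ∧ S * S = (c : ℂ) • S ∧ (S ≠ 0 → c ≠ 0 ∧ S.rank = 1) := by
  have h := hS.isHermitian
  set U : Matrix (Fin n) (Fin n) ℂ := (h.eigenvectorUnitary : Matrix (Fin n) (Fin n) ℂ) with hU
  set lam := h.eigenvalues with hlam
  set D : Matrix (Fin n) (Fin n) ℂ := diagonal (RCLike.ofReal ∘ lam) with hD
  have hspec : S = U * D * star U := h.spectral_theorem
  have hU2 : star U * U = 1 := (Matrix.mem_unitaryGroup_iff').mp h.eigenvectorUnitary.2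
  have hcard : Fintype.card {i // lam i ≠ 0} ≤ 1 := by
    rw [← h.rank_eq_card_non_zero_eigs]; exact hr
  have huniq : ∀ i j, lam i ≠ 0 → lam j ≠ 0 → i = j := by
    intro i j hi hj
    have := Fintype.card_le_one_iff.mp hcard ⟨i, hi⟩ ⟨j, hj⟩
    exact congrArg Subtype.val this
  have hdiagz : (∀ i, lam i = 0) → S = 0 := by
    intro hall
    rw [hspec, hD]
    have : (diagonal (RCLike.ofReal ∘ lam) : Matrix (Fin n) (Fin n) ℂ) = 0 := by
      ext i j
      by_cases hij : i = j <;> simp [diagonal, hij, hall]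
    rw [this, Matrix.mul_zero, Matrix.zero_mul]
  refine ⟨∑ i, lam i, ?_, ?_, ?_⟩
  · rw [hspec, Matrix.trace_mul_cycle, hU2, Matrix.one_mul]
    simp [hD, trace_diagonal]
  · have hDD : D * D = ((∑ i, lam i : ℝ) : ℂ) • D := by
      rw [hD, diagonal_mul_diagonal]
      ext i j
      by_cases hij : i = j
      · subst hij
        simp only [diagonal_apply_eq, Matrix.smul_apply, Function.comp_apply, smul_eq_mul]
        by_cases hi : lam i = 0
        · simp [hi]
        · have hsum : (∑ j, lam j) = lam i := by
            refine Finset.sum_eq_single i (fun j _ hj => ?_) (by simp)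
            by_contra hjne
            exact hj (huniq j i hjne hi)
          rw [hsum]
          norm_cast
          first
          | exact Complex.ofReal_mul _ _
          | exact RCLike.ofReal_mul _ _
          | simp [RCLike.ofReal_mul]
      · simp [diagonal_apply_ne _ hij, hij]
    calc S * S = U * D * (star U * U) * (D * star U) := by
          rw [hspec]; simp only [Matrix.mul_assoc]
      _ = U * (D * D) * star U := by
          rw [hU2, Matrix.mul_one]; simp only [Matrix.mul_assoc]
      _ = ((∑ i, lam i : ℝ) : ℂ) • S := by
          rw [hDD, hspec, Matrix.mul_smul, Matrix.smul_mul]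
  · intro hS0
    constructor
    · intro hc
      push_cast at hc
      refine hS0 (hdiagz fun i => ?_)
      have hnn : ∀ j ∈ Finset.univ, (0:ℝ) ≤ lam j := fun j _ => hS.eigenvalues_nonneg j
      exact (Finset.sum_eq_zero_iff_of_nonneg hnn).mp hc i (Finset.mem_univ i)
    · refine le_antisymm hr ?_
      rw [h.rank_eq_card_non_zero_eigs, Nat.one_le_iff_ne_zero]
      intro hcz
      by_cases hall : ∀ i, lam i = 0
      · exact hS0 (hdiagz hall)
      · push_neg at hall
        obtain ⟨i, hi⟩ := hall
        have : Nonempty {i // lam i ≠ 0} := ⟨⟨i, hi⟩⟩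
        exact Fintype.card_ne_zero hcz


lemma exists_rank_one_proj {n : ℕ} (hn : 1 ≤ n) :
    ∃ R : Matrix (Fin n) (Fin n) ℂ, Rᴴ = R ∧ R * R = R ∧ R.rank = 1 := by
  have hpos : 0 < n := hn
  set i0 : Fin n := ⟨0, hpos⟩
  set v : Fin n → ℂ := fun i => if i = i0 then 1 else 0 with hv
  refine ⟨diagonal v, ?_, ?_, ?_⟩
  · have hsv : star v = v := funext fun i => by by_cases hi : i = i0 <;> simp [hv, hi]
    rw [diagonal_conjTranspose, hsv]
  · have hvv : (fun i => v i * v i) = v := funext fun i => by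
      by_cases hi : i = i0 <;> simp [hv, hi]
    rw [diagonal_mul_diagonal, hvv]
  · rw [rank_diagonal]
    have he : ∀ i, v i ≠ 0 ↔ i = i0 := by
      intro i
      by_cases hi : i = i0 <;> simp [hv, hi]
    rw [Fintype.card_congr (Equiv.subtypeEquivRight he)]
    exact Fintype.card_subtype_eq i0

lemma real_smul_matrix {n : ℕ} (c : ℝ) (A : Matrix (Fin n) (Fin n) ℂ) :
    c • A = (c : ℂ) • A := by
  ext i j
  simp [Matrix.smul_apply, Complex.real_smul]

lemma psd_kill {n : ℕ} {ρ P : Matrix (Fin n) (Fin n) ℂ} (hρ : ρ.PosSemidef)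
    (hP : Pᴴ = P) (h : P * ρ * P = 0) : ρ * P = 0 := by
  obtain ⟨A, hAH', -, hAA'⟩ := by
    open MatrixOrder in
    exact CFC.exists_sqrt_of_isSelfAdjoint_of_quasispectrumRestricts hρ.isHermitian
      (QuasispectrumRestricts.nnreal_of_nonneg hρ.nonneg)
  have hAH : Aᴴ = A := hAH'
  have hAA : A * A = ρ := hAA'
  have h1 : (A * P)ᴴ * (A * P) = 0 := by
    rw [conjTranspose_mul, hAH, hP, mul_assoc, ← mul_assoc A A P, hAA, ← mul_assoc, h]
  have h2 : A * P = 0 := conjTranspose_mul_self_eq_zero.mp h1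
  rw [← hAA, mul_assoc, h2, mul_zero]

/-- `QρQ` is a scalar multiple (possibly zero) of a rank-one orthogonal
projection iff `Q = Q′ + Q″` with `Q′, Q″` orthogonal projections, `Q′Q″ = 0`,
`rank Q′ ≤ 1` and `ρQ″ = 0`. -/
theorem compression_rank_one_iff {n : ℕ} (hn : 1 ≤ n)
    (ρ Q : Matrix (Fin n) (Fin n) ℂ)
    (hρ : ρ.PosSemidef) (hρ1 : ρ.trace = 1)
    (hQ : Qᴴ = Q) (hQ2 : Q * Q = Q) :
    (∃ (c : ℝ) (R : Matrix (Fin n) (Fin n) ℂ),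
        Rᴴ = R ∧ R * R = R ∧ R.rank = 1 ∧ Q * ρ * Q = c • R) ↔
    (∃ Q' Q'' : Matrix (Fin n) (Fin n) ℂ,
        Q'ᴴ = Q' ∧ Q' * Q' = Q' ∧ Q''ᴴ = Q'' ∧ Q'' * Q'' = Q'' ∧
        Q' * Q'' = 0 ∧ Q'.rank ≤ 1 ∧ ρ * Q'' = 0 ∧ Q = Q' + Q'') := by
  constructor
  · rintro ⟨c, R, hR1, hR2, hRrank, hEq⟩
    rw [real_smul_matrix] at hEq
    by_cases h0 : Q * ρ * Q = 0
    · refine ⟨0, Q, by simp, by simp, hQ, hQ2, by simp, ?_, psd_kill hρ hQ h0, by simp⟩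
      simp [Matrix.rank_zero]
    · have hc : (c : ℂ) ≠ 0 := by
        intro h
        exact h0 (by rw [hEq, h, zero_smul])
      have hQRQ : Q * R * Q = R := by
        have h1 : Q * (Q * ρ * Q) * Q = Q * ρ * Q := by
          calc Q * (Q * ρ * Q) * Q = Q * Q * ρ * (Q * Q) := by simp only [Matrix.mul_assoc]
            _ = Q * ρ * Q := by rw [hQ2]
        rw [hEq, Matrix.mul_smul, Matrix.smul_mul] at h1
        exact smul_right_injective _ hc h1
      have hQR : Q * R = R := by
        calc Q * R = Q * (Q * R * Q) := by rw [hQRQ]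
          _ = Q * Q * R * Q := by simp only [Matrix.mul_assoc]
          _ = R := by rw [hQ2, hQRQ]
      have hRQ : R * Q = R := by
        calc R * Q = Q * R * Q * Q := by rw [hQRQ]
          _ = Q * R * (Q * Q) := by simp only [Matrix.mul_assoc]
          _ = R := by rw [hQ2, hQRQ]
      have hermQR : (Q - R)ᴴ = Q - R := by rw [conjTranspose_sub, hQ, hR1]
      have hQmRQ : (Q - R) * Q = Q - R := by rw [Matrix.sub_mul, hQ2, hRQ]
      have hQQmR : Q * (Q - R) = Q - R := by rw [Matrix.mul_sub, hQ2, hQR]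
      have hQmRR : (Q - R) * R = 0 := by rw [Matrix.sub_mul, hQR, hR2, sub_self]
      have key : (Q - R) * ρ * (Q - R) = 0 := by
        calc (Q - R) * ρ * (Q - R) = ((Q - R) * Q) * ρ * (Q * (Q - R)) := by
              rw [hQmRQ, hQQmR]
          _ = (Q - R) * (Q * ρ * Q) * (Q - R) := by simp only [Matrix.mul_assoc]
          _ = (c : ℂ) • ((Q - R) * R * (Q - R)) := by
              rw [hEq, Matrix.mul_smul, Matrix.smul_mul]
          _ = 0 := by rw [hQmRR, Matrix.zero_mul, smul_zero]
      refine ⟨R, Q - R, hR1, hR2, hermQR, ?_, ?_, le_of_eq hRrank,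
        psd_kill hρ hermQR key, by abel⟩
      · rw [Matrix.sub_mul, hQQmR, Matrix.mul_sub, hRQ, hR2, sub_self, sub_zero]
      · rw [Matrix.mul_sub, hRQ, hR2, sub_self]
  · rintro ⟨Q', Q'', h1, h2, h3, h4, h5, h6, h7, h8⟩
    have h7' : Q'' * ρ = 0 := by
      have := congrArg conjTranspose h7
      rwa [conjTranspose_mul, h3, hρ.isHermitian.eq, conjTranspose_zero] at this
    have hred : Q * ρ * Q = Q' * ρ * Q' := by
      rw [h8, Matrix.add_mul, h7', add_zero, Matrix.mul_add, Matrix.mul_assoc Q' ρ Q'', h7,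
        Matrix.mul_zero, add_zero]
    set S := Q' * ρ * Q' with hSdef
    have hSpsd : S.PosSemidef := by
      have := hρ.conjTranspose_mul_mul_same Q'
      rwa [h1] at this
    have hSrank : S.rank ≤ 1 := le_trans (rank_mul_le_right (Q' * ρ) Q') h6
    obtain ⟨c, htr, hsq, hne⟩ := psd_rank_le_one hSpsd hSrank
    by_cases hS0 : S = 0
    · obtain ⟨R, hR1, hR2, hR3⟩ := exists_rank_one_proj hn
      exact ⟨0, R, hR1, hR2, hR3, by rw [hred, hS0]; simp⟩
    · obtain ⟨hc0, hrank1⟩ := hne hS0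
      have hcC : (c : ℂ) ≠ 0 := by exact_mod_cast hc0
      refine ⟨c, (c : ℂ)⁻¹ • S, ?_, ?_, ?_, ?_⟩
      · rw [conjTranspose_smul, hSpsd.isHermitian.eq]
        congr 1
        simp [Complex.star_def, map_inv₀, Complex.conj_ofReal]
      · rw [Matrix.smul_mul, Matrix.mul_smul, hsq, smul_smul, smul_smul]
        congr 1
        field_simp
      · have hle1 : ((c : ℂ)⁻¹ • S).rank ≤ S.rank := by
          rw [show (c : ℂ)⁻¹ • S = ((c : ℂ)⁻¹ • (1 : Matrix (Fin n) (Fin n) ℂ)) * S by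
            rw [Matrix.smul_mul, Matrix.one_mul]]
          exact rank_mul_le_right _ _
        have hge : S.rank ≤ ((c : ℂ)⁻¹ • S).rank := by
          have hh : S = ((c : ℂ) • (1 : Matrix (Fin n) (Fin n) ℂ)) * ((c : ℂ)⁻¹ • S) := by
            rw [Matrix.smul_mul, Matrix.one_mul, smul_smul, mul_inv_cancel₀ hcC, one_smul]
          conv_lhs => rw [hh]
          exact rank_mul_le_right _ _
        omega
      · rw [hred, real_smul_matrix, smul_smul, mul_inv_cancel₀ hcC, one_smul]
end

section
/- Let ρ and σ be density matrices, with σ = Σ_j σ_j Q_j the spectral decomposition of σ into distinct eigenvalues. Suppose that for each j with σ_j > 0 there is an orthogonal projection Q′_j and a scalar c_j ≥ 0 with Q_j ρ Q_j = c_j·Q′_j (so c_j·rank Q′_j = tr(Q_j ρ)). Then S(ρ|σ) = Σ_j tr(Q_j ρ)·tr(Q_j σ)·ln(rank Q′_j), where the sum runs over the j with Q_j ρ Q_j ≠ 0 and σ_j > 0. -/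
open Matrix
open scoped ComplexOrder

open Polynomial

section AuxLemmas
variable {n m : ℕ}

private lemma pow_sum_smul_proj (s : Fin m → ℝ) (Q : Fin m → Matrix (Fin n) (Fin n) ℂ)
    (hQidem : ∀ j, Q j * Q j = Q j)
    (hQorth : ∀ j j', j ≠ j' → Q j * Q j' = 0)
    (hQsum : ∑ j, Q j = 1) (k : ℕ) :
    (∑ j, (s j : ℂ) • Q j) ^ k = ∑ j, ((s j : ℂ) ^ k) • Q j := by
  induction k with
  | zero => simpa using hQsum.symm
  | succ k ih =>
    rw [pow_succ, ih, Finset.sum_mul_sum]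
    refine Finset.sum_congr rfl fun j _ => ?_
    rw [Finset.sum_eq_single j]
    · rw [smul_mul_smul_comm, hQidem j, pow_succ]
    · intro j' _ hj'
      rw [smul_mul_smul_comm, hQorth j j' (Ne.symm hj'), smul_zero]
    · simp

private lemma aeval_sum_smul_proj (s : Fin m → ℝ) (Q : Fin m → Matrix (Fin n) (Fin n) ℂ)
    (hQidem : ∀ j, Q j * Q j = Q j)
    (hQorth : ∀ j j', j ≠ j' → Q j * Q j' = 0)
    (hQsum : ∑ j, Q j = 1) (p : Polynomial ℂ) :
    aeval (∑ j, (s j : ℂ) • Q j) p = ∑ j, (p.eval (s j : ℂ)) • Q j := by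
  induction p using Polynomial.induction_on' with
  | add p q hp hq => simp only [map_add, hp, hq, eval_add, add_smul, Finset.sum_add_distrib]
  | monomial k a =>
    rw [aeval_monomial, pow_sum_smul_proj s Q hQidem hQorth hQsum, ← Algebra.smul_def,
      Finset.smul_sum]
    refine Finset.sum_congr rfl fun j _ => ?_
    rw [smul_smul, eval_monomial]

private lemma myConjPow (u A : Matrix (Fin n) (Fin n) ℂ) (hu : u * star u = 1)
    (hu2 : star u * u = 1) (k : ℕ) : (u * A * star u) ^ k = u * A ^ k * star u := by
  induction k with
  | zero => simpa using hu.symm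
  | succ k ih =>
    rw [pow_succ, ih, pow_succ]
    calc u * A ^ k * star u * (u * A * star u)
        = u * A ^ k * (star u * u) * A * star u := by noncomm_ring
      _ = u * (A ^ k * A) * star u := by rw [hu2]; noncomm_ring

private lemma aeval_unitary_conj (u A : Matrix (Fin n) (Fin n) ℂ) (hu : u * star u = 1)
    (hu2 : star u * u = 1) (p : Polynomial ℂ) :
    aeval (u * A * star u) p = u * aeval A p * star u := by
  induction p using Polynomial.induction_on' with
  | add p q hp hq => simp only [map_add, hp, hq, mul_add, add_mul]
  | monomial k a =>
    rw [aeval_monomial, aeval_monomial, myConjPow u A hu hu2, ← Algebra.smul_def,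
      ← Algebra.smul_def, mul_smul_comm, smul_mul_assoc]

private lemma aeval_diagonal (d : Fin n → ℂ) (p : Polynomial ℂ) :
    aeval (Matrix.diagonal d) p = Matrix.diagonal (fun i => p.eval (d i)) := by
  have h1 : Matrix.diagonal d = Matrix.diagonalAlgHom (n := Fin n) ℂ d := rfl
  rw [h1, aeval_algHom_apply]
  have h2 : (aeval d) p = fun i => eval (d i) p := by
    funext i
    rw [aeval_fn_apply]
    rw [Polynomial.coe_aeval_eq_eval]
  show Matrix.diagonal ((aeval d) p) = _
  rw [h2]

private lemma trace_eq_sum_eig {A : Matrix (Fin n) (Fin n) ℂ} (hA : A.IsHermitian) :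
    A.trace = ∑ i, (hA.eigenvalues i : ℂ) := by
  conv_lhs => rw [hA.spectral_theorem, Unitary.conjStarAlgAut_apply]
  rw [Matrix.trace_mul_cycle, Unitary.coe_star_mul_self, one_mul]
  simp [Matrix.trace_diagonal]

private lemma eig_two_valued {A : Matrix (Fin n) (Fin n) ℂ} (hA : A.IsHermitian) (r : ℝ)
    (h2 : A * A = (r : ℂ) • A) (i : Fin n) :
    hA.eigenvalues i = 0 ∨ hA.eigenvalues i = r := by
  have key := hA.conjStarAlgAut_star_eigenvectorUnitary
  set U : Matrix (Fin n) (Fin n) ℂ := (hA.eigenvectorUnitary : Matrix (Fin n) (Fin n) ℂ) with hU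
  have hu : U * star U = 1 := Unitary.coe_mul_star_self _
  set D : Matrix (Fin n) (Fin n) ℂ := diagonal (fun i => (hA.eigenvalues i : ℂ)) with hDdef
  have key' : star U * A * U = D := by
    rw [Unitary.conjStarAlgAut_apply, Unitary.coe_star, star_star] at key; exact key
  have hD : D * D = (r : ℂ) • D := by
    rw [← key']
    calc star U * A * U * (star U * A * U) = star U * (A * (U * star U) * A) * U := by
          noncomm_ring
      _ = star U * (A * A) * U := by rw [hu]; noncomm_ring
      _ = (r : ℂ) • (star U * A * U) := by rw [h2]; simp [Matrix.mul_smul, Matrix.smul_mul]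
  rw [diagonal_mul_diagonal] at hD
  have := congrFun (congrFun hD i) i
  simp only [hDdef, diagonal_apply_eq, Pi.mul_apply, Function.comp_apply, Matrix.smul_apply,
    smul_eq_mul] at this
  have hre : hA.eigenvalues i * hA.eigenvalues i = r * hA.eigenvalues i := by
    exact_mod_cast this
  by_cases h0 : hA.eigenvalues i = 0
  · exact Or.inl h0
  · exact Or.inr (mul_right_cancel₀ h0 hre)

private lemma trace_eigProj_indicator (U : Matrix (Fin n) (Fin n) ℂ) (hu2 : star U * U = 1)
    (d : Fin n → ℂ) : (U * diagonal d * star U).trace = ∑ i, d i := by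
  rw [Matrix.trace_mul_cycle, hu2, one_mul]
  simp [Matrix.trace_diagonal]

end AuxLemmas

section MoreAux
variable {n : ℕ}

private lemma trace_re_eq_rank {P : Matrix (Fin n) (Fin n) ℂ} (hP : Pᴴ = P) (hP2 : P * P = P) :
    P.trace.re = (P.rank : ℝ) := by
  have hH : P.IsHermitian := hP
  have h2 : P * P = ((1 : ℝ) : ℂ) • P := by simpa using hP2
  have htr : P.trace = ∑ i, (hH.eigenvalues i : ℂ) := trace_eq_sum_eig hH
  have hre : P.trace.re = ∑ i, hH.eigenvalues i := by
    rw [htr]; simp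
  rw [hre, hH.rank_eq_card_non_zero_eigs]
  rw [Fintype.card_subtype, ← Finset.sum_boole]
  refine Finset.sum_congr rfl fun i _ => ?_
  rcases eig_two_valued hH 1 h2 i with h | h <;> simp [h]

private lemma eta_of_sq {A : Matrix (Fin n) (Fin n) ℂ} (hA : A.IsHermitian) (r : ℝ)
    (h2 : A * A = (r : ℂ) • A) :
    eta A = -(A.trace.re * Real.log r) := by
  have hre : A.trace.re = ∑ i, hA.eigenvalues i := by
    rw [trace_eq_sum_eig hA]; simp
  unfold _root_.eta
  rw [dif_pos hA]
  rw [hre, neg_inj, Finset.sum_mul]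
  refine Finset.sum_congr rfl fun i _ => ?_
  rcases eig_two_valued hA r h2 i with h | h
  · simp [h]
  · rw [h]

end MoreAux

open scoped Classical in
/-- If `σ = ∑ⱼ σⱼ Qⱼ` is the spectral decomposition of `σ` into distinct
eigenvalues and for each `j` with `σⱼ > 0` the compression `Qⱼ ρ Qⱼ` is a nonnegative
multiple `cⱼ · Q′ⱼ` of an orthogonal projection `Q′ⱼ`, then
`S(ρ|σ) = ∑ⱼ tr(Qⱼρ)·tr(Qⱼσ)·ln(rank Q′ⱼ)`, the sum running over the `j` with
`Qⱼ ρ Qⱼ ≠ 0` and `σⱼ > 0`. -/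
theorem condS_of_compressions_proportional_to_projections {n m : ℕ} (hn : 1 ≤ n)
    (ρ σ : Matrix (Fin n) (Fin n) ℂ)
    (hρ : ρ.PosSemidef) (hρ1 : ρ.trace = 1)
    (hσ : σ.PosSemidef) (hσ1 : σ.trace = 1)
    (s : Fin m → ℝ) (Q : Fin m → Matrix (Fin n) (Fin n) ℂ)
    (hs : Function.Injective s)
    (hQproj : ∀ j, (Q j)ᴴ = Q j ∧ Q j * Q j = Q j ∧ Q j ≠ 0)
    (hQorth : ∀ j j', j ≠ j' → Q j * Q j' = 0)
    (hQsum : ∑ j, Q j = 1)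
    (hσdec : σ = ∑ j, s j • Q j)
    (Q' : Fin m → Matrix (Fin n) (Fin n) ℂ) (c : Fin m → ℝ)
    (hQ' : ∀ j, 0 < s j → (Q' j)ᴴ = Q' j ∧ Q' j * Q' j = Q' j ∧ 0 ≤ c j ∧
      Q j * ρ * Q j = c j • Q' j) :
    condS ρ σ = ∑ j ∈ Finset.univ.filter (fun j => Q j * ρ * Q j ≠ 0 ∧ 0 < s j),
      (Q j * ρ).trace.re * (Q j * σ).trace.re * Real.log ((Q' j).rank : ℝ) := by
  have h : σ.IsHermitian := hσ.1
  have hQi : ∀ j, Q j * Q j = Q j := fun j => (hQproj j).2.1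
  have hQ0 : ∀ j, Q j ≠ 0 := fun j => (hQproj j).2.2
  set U : Matrix (Fin n) (Fin n) ℂ := (h.eigenvectorUnitary : Matrix (Fin n) (Fin n) ℂ) with hU
  have hu : U * star U = 1 := Unitary.coe_mul_star_self _
  have hu2 : star U * U = 1 := Unitary.coe_star_mul_self _
  have hσ' : σ = ∑ j, ((s j : ℂ)) • Q j := by
    rw [hσdec]
    refine Finset.sum_congr rfl fun j _ => ?_
    ext i k
    simp [Matrix.smul_apply, Complex.real_smul]
  -- the interpolation nodes
  set T : Finset ℝ := Finset.image h.eigenvalues Finset.univ ∪ Finset.image s Finset.univ with hT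
  have hinj : Set.InjOn (fun x : ℝ => (x : ℂ)) T := fun x _ y _ hxy =>
    Complex.ofReal_injective hxy
  -- the master identity
  have MI : ∀ c0 ∈ T,
      U * Matrix.diagonal (fun i => if h.eigenvalues i = c0 then (1 : ℂ) else 0) * star U
        = ∑ j, (if s j = c0 then (1 : ℂ) else 0) • Q j := by
    intro c0 hc0
    set p : Polynomial ℂ :=
      Lagrange.interpolate T (fun x : ℝ => (x : ℂ)) (fun x => if x = c0 then (1 : ℂ) else 0)
      with hp
    have way1 : aeval σ p
        = U * Matrix.diagonal (fun i => if h.eigenvalues i = c0 then (1 : ℂ) else 0) * star U := by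
      conv_lhs => rw [h.spectral_theorem, Unitary.conjStarAlgAut_apply]
      rw [aeval_unitary_conj _ _ hu hu2, aeval_diagonal]
      have hfun : (fun i => eval ((RCLike.ofReal ∘ h.eigenvalues) i) p)
          = fun i => if h.eigenvalues i = c0 then (1 : ℂ) else 0 := by
        funext i
        have hnode : h.eigenvalues i ∈ T := by simp [hT]
        exact Lagrange.eval_interpolate_at_node
          (fun x : ℝ => if x = c0 then (1 : ℂ) else 0) hinj hnode
      rw [hfun]
    have way2 : aeval σ p = ∑ j, (if s j = c0 then (1 : ℂ) else 0) • Q j := by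
      conv_lhs => rw [hσ']
      rw [aeval_sum_smul_proj s Q hQi hQorth hQsum]
      refine Finset.sum_congr rfl fun j _ => ?_
      have hnode : s j ∈ T := by simp [hT]
      have heval : eval ((s j : ℂ)) p = if s j = c0 then (1 : ℂ) else 0 :=
        Lagrange.eval_interpolate_at_node
          (fun x : ℝ => if x = c0 then (1 : ℂ) else 0) hinj hnode
      rw [heval]
    rw [← way1, way2]
  -- projections agree
  have hproj : ∀ j, eigProj h (s j) = Q j := by
    intro j
    have hmem : s j ∈ T := by simp [hT]
    have := MI (s j) hmem
    have hrhs : ∑ j', (if s j' = s j then (1 : ℂ) else 0) • Q j' = Q j := by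
      rw [Finset.sum_eq_single j]
      · simp
      · intro j' _ hj'
        rw [if_neg (fun hh => hj' (hs hh)), zero_smul]
      · simp
    rw [eigProj]
    rw [← hU] at *
    rw [this, hrhs]
  -- images agree
  have himg : Finset.image h.eigenvalues Finset.univ = Finset.image s Finset.univ := by
    apply Finset.Subset.antisymm
    · intro c0 hc0
      obtain ⟨i0, _, hi0⟩ := Finset.mem_image.mp hc0
      by_contra hc
      have hno : ∀ j, s j ≠ c0 := by
        intro j hj
        exact hc (Finset.mem_image.mpr ⟨j, Finset.mem_univ j, hj⟩)
      have := MI c0 (Finset.mem_union_left _ hc0)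
      have hz : ∑ j, (if s j = c0 then (1 : ℂ) else 0) • Q j = 0 := by
        refine Finset.sum_eq_zero fun j _ => ?_
        rw [if_neg (hno j), zero_smul]
      rw [hz] at this
      have htr := congrArg Matrix.trace this
      rw [trace_eigProj_indicator U hu2] at htr
      rw [Finset.sum_boole] at htr
      simp only [Matrix.trace_zero] at htr
      have : i0 ∈ Finset.univ.filter (fun i => h.eigenvalues i = c0) := by
        simp [hi0]
      have hcard : (Finset.univ.filter (fun i => h.eigenvalues i = c0)).card ≠ 0 :=
        Finset.card_ne_zero_of_mem this
      exact hcard (by exact_mod_cast htr)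
    · intro c0 hc0
      obtain ⟨j0, _, hj0⟩ := Finset.mem_image.mp hc0
      by_contra hc
      have hno : ∀ i, h.eigenvalues i ≠ c0 := by
        intro i hi
        exact hc (Finset.mem_image.mpr ⟨i, Finset.mem_univ i, hi⟩)
      have := MI c0 (Finset.mem_union_right _ hc0)
      have hdz : Matrix.diagonal (fun i => if h.eigenvalues i = c0 then (1 : ℂ) else 0)
          = (0 : Matrix (Fin n) (Fin n) ℂ) := by
        rw [show (fun i => if h.eigenvalues i = c0 then (1 : ℂ) else 0) = fun _ => (0 : ℂ) from
          funext fun i => if_neg (hno i)]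
        simp
      rw [hdz, Matrix.mul_zero, Matrix.zero_mul] at this
      have hrhs : ∑ j', (if s j' = c0 then (1 : ℂ) else 0) • Q j' = Q j0 := by
        rw [Finset.sum_eq_single j0]
        · rw [if_pos hj0, one_smul]
        · intro j' _ hj'
          rw [if_neg (fun hh => hj' (hs (by rw [hh, hj0]))), zero_smul]
        · simp
      rw [hrhs] at this
      exact hQ0 j0 this.symm
  -- nonnegativity of s
  have hs_nonneg : ∀ j, 0 ≤ s j := by
    intro j
    have : s j ∈ Finset.image h.eigenvalues Finset.univ := by
      rw [himg]; exact Finset.mem_image.mpr ⟨j, Finset.mem_univ j, rfl⟩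
    obtain ⟨i, _, hi⟩ := Finset.mem_image.mp this
    rw [← hi]
    exact hσ.eigenvalues_nonneg i
  -- Q j * σ
  have hQσ : ∀ j, Q j * σ = (s j : ℂ) • Q j := by
    intro j
    rw [hσ', Finset.mul_sum]
    rw [Finset.sum_eq_single j]
    · rw [mul_smul_comm, hQi j]
    · intro j' _ hj'
      rw [mul_smul_comm, hQorth j j' (Ne.symm hj'), smul_zero]
    · simp
  have htrQσ : ∀ j, (Q j * σ).trace.re = s j * (Q j).trace.re := by
    intro j
    rw [hQσ j, Matrix.trace_smul]
    simp [Complex.real_smul]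
  -- unfold condS
  have hcondS : condS ρ σ = ∑ c0 ∈ Finset.image h.eigenvalues Finset.univ,
      (eigProj h c0 * σ).trace.re * condF ρ (eigProj h c0) := by
    unfold condS
    rw [dif_pos h]
  rw [hcondS, himg, Finset.sum_image (fun x _ y _ hxy => hs hxy)]
  simp only [hproj]
  rw [Finset.sum_filter]
  refine Finset.sum_congr rfl fun j _ => ?_
  by_cases hsj : 0 < s j
  · obtain ⟨hQ'h, hQ'i, hc0, hAeq⟩ := hQ' j hsj
    have hAeq' : Q j * ρ * Q j = ((c j : ℂ)) • Q' j := by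
      rw [hAeq]; ext i k; simp [Matrix.smul_apply, Complex.real_smul]
    by_cases hA0 : Q j * ρ * Q j ≠ 0
    · rw [if_pos ⟨hA0, hsj⟩]
      have hcne : c j ≠ 0 := by
        intro hcz
        apply hA0
        rw [hAeq', hcz]
        simp
      have hcpos : 0 < c j := lt_of_le_of_ne hc0 (Ne.symm hcne)
      have hQ'ne : Q' j ≠ 0 := by
        intro hz
        apply hA0
        rw [hAeq', hz, smul_zero]
      have hAH : (Q j * ρ * Q j).IsHermitian := by
        have : (Q j * ρ * Q j)ᴴ = Q j * ρ * Q j := by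
          rw [Matrix.conjTranspose_mul, Matrix.conjTranspose_mul, (hQproj j).1, hρ.1.eq]
          noncomm_ring
        exact this
      have hA2 : (Q j * ρ * Q j) * (Q j * ρ * Q j) = ((c j : ℂ)) • (Q j * ρ * Q j) := by
        rw [hAeq', smul_mul_smul_comm, hQ'i, smul_smul]
      have htrA : (Q j * ρ * Q j).trace = (Q j * ρ).trace := by
        rw [Matrix.trace_mul_cycle, hQi j]
      have htrQ' : (Q' j).trace.re = ((Q' j).rank : ℝ) := trace_re_eq_rank hQ'h hQ'i
      have hrk1 : (1 : ℝ) ≤ ((Q' j).rank : ℝ) := by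
        have hQH : (Q' j).IsHermitian := hQ'h
        have : (Q' j).rank ≠ 0 := by
          intro hr
          apply hQ'ne
          have hcard : Fintype.card {i // hQH.eigenvalues i ≠ 0} = 0 := by
            rw [← hQH.rank_eq_card_non_zero_eigs]; exact hr
          have hall : ∀ i, hQH.eigenvalues i = 0 := fun i => by
            by_contra hi
            exact (Fintype.card_eq_zero_iff.mp hcard).elim ⟨i, hi⟩
          have hdz : Matrix.diagonal (RCLike.ofReal ∘ hQH.eigenvalues)
              = (0 : Matrix (Fin n) (Fin n) ℂ) := by
            ext i k
            by_cases hik : i = k <;> simp [Matrix.diagonal_apply, hik, hall]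
          rw [hQH.spectral_theorem, Unitary.conjStarAlgAut_apply, hdz, Matrix.mul_zero, Matrix.zero_mul]
        exact_mod_cast Nat.one_le_iff_ne_zero.mpr this
      have ht : (Q j * ρ * Q j).trace.re = c j * ((Q' j).rank : ℝ) := by
        rw [hAeq', Matrix.trace_smul, smul_eq_mul, Complex.re_ofReal_mul, htrQ']
      have hcondF : condF ρ (Q j) = (Q j * ρ).trace.re * Real.log ((Q' j).rank : ℝ) := by
        have ht2 : (Q j * ρ).trace.re = c j * ((Q' j).rank : ℝ) := by
          rw [← htrA] at *
          exact ht
        have hrkne : ((Q' j).rank : ℝ) ≠ 0 := by linarith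
        rw [condF, eta_of_sq hAH (c j) hA2, ht, ht2, Real.log_mul hcne hrkne]
        ring
      rw [hcondF]
      ring
    · push_neg at hA0
      rw [if_neg (by simp [hA0])]
      have hcondF : condF ρ (Q j) = 0 := by
        rw [condF, hA0]
        have : eta (0 : Matrix (Fin n) (Fin n) ℂ) = 0 := by
          have h0H : (0 : Matrix (Fin n) (Fin n) ℂ).IsHermitian := Matrix.isHermitian_zero
          have := eta_of_sq h0H 1 (by simp)
          simpa using this
        simp [this]
      rw [hcondF, mul_zero]
  · rw [if_neg (by simp [hsj])]
    have : s j = 0 := le_antisymm (not_lt.mp hsj) (hs_nonneg j)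
    rw [htrQσ j, this]
    simp
end

section
/- Let ρ and σ be density matrices with tr(ρσ) = 0 (equivalently, ρσ = 0). Then S(ρ|σ) = 0. -/
open Matrix
open scoped ComplexOrder

private lemma trace_conj {n : ℕ} {U : Matrix (Fin n) (Fin n) ℂ} (hU : star U * U = 1)
    (X : Matrix (Fin n) (Fin n) ℂ) : (U * X * star U).trace = X.trace := by
  rw [Matrix.trace_mul_cycle, hU, Matrix.one_mul]

private lemma conj_mul_conj {n : ℕ} {U : Matrix (Fin n) (Fin n) ℂ} (hU : star U * U = 1)
    (X Y : Matrix (Fin n) (Fin n) ℂ) :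
    (U * X * star U) * (U * Y * star U) = U * (X * Y) * star U := by
  simp only [Matrix.mul_assoc]
  rw [← Matrix.mul_assoc (star U) U, hU, Matrix.one_mul]

private lemma conj_eq_zero {n : ℕ} {U X : Matrix (Fin n) (Fin n) ℂ}
    (hU : star U * U = 1) (h : U * X * star U = 0) : X = 0 := by
  have h2 := congrArg (fun Z => star U * Z * U) h
  simp only [Matrix.mul_zero, Matrix.zero_mul] at h2
  rw [← h2]
  have h3 : star U * (U * X * star U) * U = (star U * U) * X * (star U * U) := by
    simp only [Matrix.mul_assoc]
  rw [h3, hU, Matrix.one_mul, Matrix.mul_one]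

private lemma eq_zero_of_trace_ct_mul_self {n : ℕ} {C : Matrix (Fin n) (Fin n) ℂ}
    (h : (Cᴴ * C).trace = 0) : C = 0 := by
  have h2 : ∑ j, ∑ k, Complex.normSq (C k j) = 0 := by
    have h3 : ((∑ j, ∑ k, Complex.normSq (C k j) : ℝ) : ℂ) = 0 := by
      rw [← h, Matrix.trace]
      simp [Matrix.diag, Matrix.mul_apply, Complex.normSq_eq_conj_mul_self]
    exact_mod_cast h3
  ext i j
  have h4 := (Finset.sum_eq_zero_iff_of_nonneg (fun k _ => Finset.sum_nonneg
    (fun l _ => Complex.normSq_nonneg _))).mp h2 j (Finset.mem_univ j)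
  have h5 := (Finset.sum_eq_zero_iff_of_nonneg (fun l _ => Complex.normSq_nonneg _)).mp h4 i
    (Finset.mem_univ i)
  simpa using Complex.normSq_eq_zero.mp h5

namespace Matrix.PosSemidef
open scoped MatrixOrder
noncomputable def sqrt {n : ℕ} {A : Matrix (Fin n) (Fin n) ℂ} (_hA : A.PosSemidef) :
    Matrix (Fin n) (Fin n) ℂ := CFC.sqrt A
lemma posSemidef_sqrt {n : ℕ} {A : Matrix (Fin n) (Fin n) ℂ} (hA : A.PosSemidef) :
    hA.sqrt.PosSemidef := Matrix.nonneg_iff_posSemidef.mp (CFC.sqrt_nonneg A)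
lemma sqrt_mul_self {n : ℕ} {A : Matrix (Fin n) (Fin n) ℂ} (hA : A.PosSemidef) :
    hA.sqrt * hA.sqrt = A := CFC.sqrt_mul_sqrt_self A hA.nonneg
end Matrix.PosSemidef

private lemma psd_mul_eq_zero {n : ℕ} {A B : Matrix (Fin n) (Fin n) ℂ}
    (hA : A.PosSemidef) (hB : B.PosSemidef) (h : (A * B).trace = 0) : A * B = 0 := by
  have hCt : (hA.sqrt * hB.sqrt)ᴴ * (hA.sqrt * hB.sqrt) = hB.sqrt * A * hB.sqrt := by
    rw [conjTranspose_mul, hA.posSemidef_sqrt.1, hB.posSemidef_sqrt.1]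
    rw [Matrix.mul_assoc, ← Matrix.mul_assoc hA.sqrt, hA.sqrt_mul_self, ← Matrix.mul_assoc]
  have htr : ((hA.sqrt * hB.sqrt)ᴴ * (hA.sqrt * hB.sqrt)).trace = 0 := by
    rw [hCt, Matrix.trace_mul_cycle, hB.sqrt_mul_self,
      Matrix.trace_mul_comm, h]
  have hC0 : hA.sqrt * hB.sqrt = 0 := eq_zero_of_trace_ct_mul_self htr
  rw [← hA.sqrt_mul_self, ← hB.sqrt_mul_self]
  simp only [Matrix.mul_assoc]
  rw [← Matrix.mul_assoc hA.sqrt hB.sqrt hB.sqrt, hC0, Matrix.zero_mul, Matrix.mul_zero]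

private lemma eta_zero {n : ℕ} : eta (0 : Matrix (Fin n) (Fin n) ℂ) = 0 := by
  rw [eta, dif_pos Matrix.isHermitian_zero]
  have he : ∀ i, (Matrix.isHermitian_zero (α := ℂ) (n := Fin n)).eigenvalues i = 0 := by
    intro i
    rw [Matrix.IsHermitian.eigenvalues_eq]
    simp
  simp [he]

/-- If `ρ` and `σ` are density matrices with `tr(ρσ) = 0` (equivalently
`ρσ = 0`), then `S(ρ|σ) = 0`. -/
theorem condS_eq_zero_of_orthogonal {n : ℕ} (hn : 1 ≤ n)
    (ρ σ : Matrix (Fin n) (Fin n) ℂ)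
    (hρ : ρ.PosSemidef) (hρ1 : ρ.trace = 1)
    (hσ : σ.PosSemidef) (hσ1 : σ.trace = 1)
    (horth : (ρ * σ).trace = 0) :
    condS ρ σ = 0 := by
  have h : σ.IsHermitian := hσ.1
  set U : Matrix (Fin n) (Fin n) ℂ := (h.eigenvectorUnitary : Matrix (Fin n) (Fin n) ℂ) with hUdef
  have hU : star U * U = 1 := (Matrix.mem_unitaryGroup_iff').mp h.eigenvectorUnitary.2
  set D : Matrix (Fin n) (Fin n) ℂ := Matrix.diagonal (RCLike.ofReal ∘ h.eigenvalues) with hDdef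
  have hspec : σ = U * D * star U := h.spectral_theorem
  have hρσ : ρ * σ = 0 := psd_mul_eq_zero hρ hσ horth
  have hσρ : σ * ρ = 0 := by
    have h2 := congrArg conjTranspose hρσ
    rwa [conjTranspose_mul, hρ.1, hσ.1, conjTranspose_zero] at h2
  set M : Matrix (Fin n) (Fin n) ℂ := star U * ρ * U with hMdef
  have hUU : U * star U = 1 := (Matrix.mem_unitaryGroup_iff).mp h.eigenvectorUnitary.2
  have hρM : ρ = U * M * star U := by
    rw [hMdef]
    have h3 : U * (star U * ρ * U) * star U = (U * star U) * ρ * (U * star U) := by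
      simp only [Matrix.mul_assoc]
    rw [h3, hUU, Matrix.one_mul, Matrix.mul_one]
  have hDM : D * M = 0 := by
    apply conj_eq_zero hU
    rw [← conj_mul_conj hU D M, ← hspec, ← hρM, hσρ]
  rw [condS, dif_pos h]
  apply Finset.sum_eq_zero
  intro c _
  have hQ : eigProj h c = U * Matrix.diagonal (fun i => if h.eigenvalues i = c then (1 : ℂ) else 0)
      * star U := rfl
  by_cases hc0 : c = 0
  · -- coefficient tr(Q σ) is zero
    have htr : (eigProj h c * σ).trace = 0 := by
      have hprod : eigProj h c * σ =
          (U * Matrix.diagonal (fun i => if h.eigenvalues i = c then (1 : ℂ) else 0) * star U) *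
          (U * D * star U) := by rw [← hspec, hQ]
      rw [hprod, conj_mul_conj hU, trace_conj hU, hDdef, Matrix.diagonal_mul_diagonal,
        Matrix.trace_diagonal]
      apply Finset.sum_eq_zero
      intro i _
      by_cases hi : h.eigenvalues i = c
      · simp [hi, hc0]
      · simp [hi]
    rw [htr]
    simp
  · -- condF is zero since Q ρ Q = 0
    have hQρQ : eigProj h c * ρ * eigProj h c = 0 := by
      have hDindM : Matrix.diagonal (fun i => if h.eigenvalues i = c then (1 : ℂ) else 0) * M
          = 0 := by
        ext i j
        rw [Matrix.diagonal_mul]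
        by_cases hi : h.eigenvalues i = c
        · have h0 := congrFun (congrFun hDM i) j
          rw [Matrix.diagonal_mul] at h0
          simp only [Function.comp_apply] at h0
          have hlam : (RCLike.ofReal (h.eigenvalues i) : ℂ) ≠ 0 := by
            simp [hi, hc0]
          have : M i j = 0 := by
            rcases mul_eq_zero.mp h0 with h' | h'
            · exact absurd h' hlam
            · exact h'
          simp [hi, this]
        · simp [hi]
      rw [hQ, hρM, conj_mul_conj hU, conj_mul_conj hU, hDindM, Matrix.zero_mul,
        Matrix.mul_zero, Matrix.zero_mul]
    have hF : condF ρ (eigProj h c) = 0 := by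
      rw [condF, hQρQ, eta_zero]
      simp
    rw [hF, mul_zero]
end
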